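/- arXiv:2602.10022 — 11 statements merged into one kernel-verified Lean document; each statement's English description precedes it below -/
import Mathlib

section
/- Let f : ℝ^d → ℝ be C¹ with global minimizer x* and minimum value f*. Assume f satisfies: (PL) ‖∇f(x)‖² ≥ 2μ(f(x)-f*); (AC) ⟨∇f(x), x-x*⟩ ≥ a‖∇f(x)‖‖x-x*‖; (QG⁻) f(x)-f* ≥ (μ₀/2)‖x-x*‖²; and (QG⁺) f(x)-f* ≤ (L₀/2)‖x-x*‖², for all x. Then for all x: ⟨∇f(x), x*-x⟩ ≤ -a·√(μ/L₀)·(f(x)-f*) - (a/2)·√(μμ₀)·‖x-x*‖². -/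
open scoped RealInnerProductSpace

theorem scalar_prod_bound {d : ℕ} (f : EuclideanSpace ℝ (Fin d) → ℝ)
    (μ μ₀ L₀ a : ℝ) (hμ : 0 < μ) (hμ₀ : 0 < μ₀) (hL₀ : 0 < L₀)
    (ha : a ∈ Set.Ioc (0 : ℝ) 1) (hf : ContDiff ℝ 1 f)
    (xstar : EuclideanSpace ℝ (Fin d)) (hmin : ∀ y, f xstar ≤ f y)
    (hPL : ∀ x, ‖gradient f x‖ ^ 2 ≥ 2 * μ * (f x - f xstar))
    (hAC : ∀ x, ⟪gradient f x, x - xstar⟫ ≥ a * ‖gradient f x‖ * ‖x - xstar‖)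
    (hQGlow : ∀ x, f x - f xstar ≥ μ₀ / 2 * ‖x - xstar‖ ^ 2)
    (hQGup : ∀ x, f x - f xstar ≤ L₀ / 2 * ‖x - xstar‖ ^ 2) :
    ∀ x, ⟪gradient f x, xstar - x⟫ ≤
      -a * Real.sqrt (μ / L₀) * (f x - f xstar)
      - a / 2 * Real.sqrt (μ * μ₀) * ‖x - xstar‖ ^ 2 := by
  intro x
  have hip : ⟪gradient f x, xstar - x⟫ = -⟪gradient f x, x - xstar⟫ := by
    rw [← inner_neg_right, neg_sub]
  have ht : 0 ≤ f x - f xstar := sub_nonneg.2 (hmin x)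
  have hr : (0:ℝ) ≤ ‖x - xstar‖ := norm_nonneg _
  have hg : (0:ℝ) ≤ ‖gradient f x‖ := norm_nonneg _
  have hs1 : Real.sqrt (μ/L₀) ^ 2 = μ/L₀ := Real.sq_sqrt (by positivity)
  have hs2 : Real.sqrt (μ*μ₀) ^ 2 = μ*μ₀ := Real.sq_sqrt (by positivity)
  have hs1n : 0 ≤ Real.sqrt (μ/L₀) := Real.sqrt_nonneg _
  have hs2n : 0 ≤ Real.sqrt (μ*μ₀) := Real.sqrt_nonneg _
  have hPLx := hPL x
  have hup := hQGup x
  have hlow := hQGlow x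
  have hACx := hAC x
  have ha0 : 0 < a := ha.1
  have h1 : ‖gradient f x‖ * ‖x - xstar‖ ≥ 2 * Real.sqrt (μ/L₀) * (f x - f xstar) := by
    have hsq : (2 * Real.sqrt (μ/L₀) * (f x - f xstar))^2 ≤ (‖gradient f x‖ * ‖x - xstar‖)^2 := by
      have hrr : 2 * (f x - f xstar) / L₀ ≤ ‖x - xstar‖ ^ 2 := by
        rw [div_le_iff₀ hL₀]; nlinarith
      have e1 : 2 * μ * (f x - f xstar) * (2 * (f x - f xstar) / L₀)
          ≤ ‖gradient f x‖ ^ 2 * ‖x - xstar‖ ^ 2 := by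
        have := mul_le_mul hPLx.le hrr (by positivity) (sq_nonneg _)
        linarith [this]
      calc (2 * Real.sqrt (μ/L₀) * (f x - f xstar))^2
          = 2 * μ * (f x - f xstar) * (2 * (f x - f xstar) / L₀) := by
            rw [mul_pow, mul_pow, hs1]; field_simp
        _ ≤ ‖gradient f x‖ ^ 2 * ‖x - xstar‖ ^ 2 := e1
        _ = (‖gradient f x‖ * ‖x - xstar‖)^2 := by ring
    have := Real.sqrt_le_sqrt hsq
    rwa [Real.sqrt_sq (by positivity), Real.sqrt_sq (by positivity)] at this
  have h2 : ‖gradient f x‖ * ‖x - xstar‖ ≥ Real.sqrt (μ*μ₀) * ‖x - xstar‖ ^ 2 := by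
    have hg2 : Real.sqrt (μ*μ₀) * ‖x - xstar‖ ≤ ‖gradient f x‖ := by
      have hsq : (Real.sqrt (μ*μ₀) * ‖x - xstar‖)^2 ≤ ‖gradient f x‖^2 := by
        rw [mul_pow, hs2]; nlinarith
      have := Real.sqrt_le_sqrt hsq
      rwa [Real.sqrt_sq (by positivity), Real.sqrt_sq hg] at this
    calc Real.sqrt (μ*μ₀) * ‖x - xstar‖ ^ 2 = (Real.sqrt (μ*μ₀) * ‖x - xstar‖) * ‖x - xstar‖ := by ring
      _ ≤ ‖gradient f x‖ * ‖x - xstar‖ := mul_le_mul_of_nonneg_right hg2 hr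
  rw [hip]
  have key : a * (‖gradient f x‖ * ‖x - xstar‖) ≥
      a * Real.sqrt (μ/L₀) * (f x - f xstar) + a/2 * Real.sqrt (μ*μ₀) * ‖x - xstar‖ ^ 2 := by
    nlinarith [mul_le_mul_of_nonneg_left h1 (le_of_lt ha0),
      mul_le_mul_of_nonneg_left h2 (le_of_lt ha0)]
  nlinarith [hACx]
end

section
/- Let f : ℝ^d → ℝ be C¹ with global minimizer x* and minimum value f*. Assume the PL inequality ‖∇f(x)‖² ≥ 2μ(f(x)-f*), the lower quadratic growth f(x)-f* ≥ (μ₀/2)‖x-x*‖², and the upper quadratic growth f(x)-f* ≤ (L₀/2)‖x-x*‖² for all x. Then for all x: ‖x-x*‖·‖∇f(x)‖ ≥ √(μ/L₀)·(f(x)-f*) + (√(μμ₀)/2)·‖x-x*‖². -/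
open scoped RealInnerProductSpace

theorem prod_lower_bound {d : ℕ} (f : EuclideanSpace ℝ (Fin d) → ℝ)
    (μ μ₀ L₀ : ℝ) (hμ : 0 < μ) (hμ₀ : 0 < μ₀) (hL₀ : 0 < L₀)
    (hf : ContDiff ℝ 1 f)
    (xstar : EuclideanSpace ℝ (Fin d)) (hmin : ∀ y, f xstar ≤ f y)
    (hPL : ∀ x, ‖gradient f x‖ ^ 2 ≥ 2 * μ * (f x - f xstar))
    (hQGlow : ∀ x, f x - f xstar ≥ μ₀ / 2 * ‖x - xstar‖ ^ 2)
    (hQGup : ∀ x, f x - f xstar ≤ L₀ / 2 * ‖x - xstar‖ ^ 2) :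
    ∀ x, ‖x - xstar‖ * ‖gradient f x‖ ≥
      Real.sqrt (μ / L₀) * (f x - f xstar)
      + Real.sqrt (μ * μ₀) / 2 * ‖x - xstar‖ ^ 2 := by
  intro x
  have hup := hQGup x
  have hlow := hQGlow x
  have hPLx := hPL x
  set r := ‖x - xstar‖ with hrdef
  set g := ‖gradient f x‖ with hgdef
  set Δ := f x - f xstar with hΔdef
  clear_value r g Δ
  have hΔ : 0 ≤ Δ := hΔdef ▸ sub_nonneg.mpr (hmin x)
  have hr0 : 0 ≤ r := hrdef ▸ norm_nonneg _
  have hg0 : 0 ≤ g := hgdef ▸ norm_nonneg _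
  have hgs : Real.sqrt (2 * μ * Δ) ≤ g := by
    calc Real.sqrt (2 * μ * Δ) ≤ Real.sqrt (g ^ 2) := Real.sqrt_le_sqrt hPLx
    _ = g := Real.sqrt_sq hg0
  have e2 : r * Real.sqrt (2 * μ * Δ) / 2 = Real.sqrt (r ^ 2 * (2 * μ * Δ) / 4) := by
    rw [show r ^ 2 * (2 * μ * Δ) / 4 = (r / 2) ^ 2 * (2 * μ * Δ) by ring,
      Real.sqrt_mul (sq_nonneg (r/2)) (2*μ*Δ), Real.sqrt_sq (by positivity)]
    ring
  have hA : Real.sqrt (μ / L₀) * Δ ≤ r * Real.sqrt (2 * μ * Δ) / 2 := by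
    have e1 : Real.sqrt (μ / L₀) * Δ = Real.sqrt (μ / L₀ * Δ ^ 2) := by
      rw [Real.sqrt_mul (by positivity), Real.sqrt_sq hΔ]
    rw [e1, e2]
    apply Real.sqrt_le_sqrt
    rw [div_mul_eq_mul_div, div_le_div_iff₀ hL₀ (by norm_num)]
    nlinarith [mul_le_mul_of_nonneg_left hup (mul_nonneg hμ.le hΔ)]
  have hB : Real.sqrt (μ * μ₀) / 2 * r ^ 2 ≤ r * Real.sqrt (2 * μ * Δ) / 2 := by
    have e1 : Real.sqrt (μ * μ₀) / 2 * r ^ 2 = Real.sqrt (μ * μ₀ * r ^ 4 / 4) := by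
      rw [show μ * μ₀ * r ^ 4 / 4 = (r ^ 2 / 2) ^ 2 * (μ * μ₀) by ring,
        Real.sqrt_mul (sq_nonneg (r^2/2)) (μ*μ₀), Real.sqrt_sq (by positivity)]
      ring
    rw [e1, e2]
    apply Real.sqrt_le_sqrt
    nlinarith [mul_le_mul_of_nonneg_left hlow (mul_nonneg hμ.le (sq_nonneg r))]
  have hfin : r * Real.sqrt (2 * μ * Δ) ≤ r * g := mul_le_mul_of_nonneg_left hgs hr0
  linarith
end

section
/- Let f : ℝ^d → ℝ be C¹ with global minimizer x*, minimum value f*, satisfying for all x: PL with constant μ, the aiming condition with constant a ∈ (0,1], lower quadratic growth with constant μ₀, and upper quadratic growth with constant L₀. Let x : ℝ≥0 → ℝ^d solve gradient flow x'(t) = -∇f(x(t)). Then f(x(t)) - f* ≤ (1 + √(L₀/μ₀))·e^{-a√(μμ₀)t}·(f(x(0)) - f*) for all t ≥ 0. -/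
open scoped RealInnerProductSpace

private lemma mono_aux (φ φ' : ℝ → ℝ) (h : ∀ t ∈ Set.Ici (0:ℝ), HasDerivAt φ (φ' t) t)
    (h' : ∀ t ∈ Set.Ici (0:ℝ), φ' t ≤ 0) : ∀ t, 0 ≤ t → φ t ≤ φ 0 := by
  have hanti : AntitoneOn φ (Set.Ici (0:ℝ)) := by
    apply antitoneOn_of_deriv_nonpos (convex_Ici 0)
    · exact fun t ht => (h t ht).continuousAt.continuousWithinAt
    · intro t ht
      rw [interior_Ici] at ht
      exact (h t (Set.mem_Ici.mpr (le_of_lt ht))).differentiableAt.differentiableWithinAt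
    · intro t ht
      rw [interior_Ici] at ht
      rw [(h t (Set.mem_Ici.mpr (le_of_lt ht))).deriv]
      exact h' t (Set.mem_Ici.mpr (le_of_lt ht))
  exact fun t ht => hanti (Set.self_mem_Ici) ht ht

set_option maxHeartbeats 1000000 in
theorem gradient_flow_PL_AC_convergence {d : ℕ} (f : EuclideanSpace ℝ (Fin d) → ℝ)
    (μ μ₀ L₀ a : ℝ) (hμ : 0 < μ) (hμ₀ : 0 < μ₀) (hL₀ : 0 < L₀)
    (ha : a ∈ Set.Ioc (0 : ℝ) 1) (hf : ContDiff ℝ 1 f)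
    (xstar : EuclideanSpace ℝ (Fin d)) (hmin : ∀ y, f xstar ≤ f y)
    (hPL : ∀ x, ‖gradient f x‖ ^ 2 ≥ 2 * μ * (f x - f xstar))
    (hAC : ∀ x, ⟪gradient f x, x - xstar⟫ ≥ a * ‖gradient f x‖ * ‖x - xstar‖)
    (hQGlow : ∀ x, f x - f xstar ≥ μ₀ / 2 * ‖x - xstar‖ ^ 2)
    (hQGup : ∀ x, f x - f xstar ≤ L₀ / 2 * ‖x - xstar‖ ^ 2)
    (x : ℝ → EuclideanSpace ℝ (Fin d))
    (hx : ∀ t, 0 ≤ t → HasDerivAt x (-(gradient f (x t))) t) :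
    ∀ t, 0 ≤ t → f (x t) - f xstar ≤
      (1 + Real.sqrt (L₀ / μ₀)) * Real.exp (-a * Real.sqrt (μ * μ₀) * t)
        * (f (x 0) - f xstar) := by
  obtain ⟨ha0, ha1⟩ := ha
  set r : ℝ := a * Real.sqrt (μ * μ₀) with hr
  have hrpos : 0 < r := mul_pos ha0 (Real.sqrt_pos.mpr (mul_pos hμ hμ₀))
  have hdiff : ∀ y, DifferentiableAt ℝ f y := fun y => (hf.differentiable one_ne_zero) y
  -- F := f ∘ x is nonincreasing on [0, ∞)
  have hF : ∀ t ∈ Set.Ici (0:ℝ), HasDerivAt (fun t => f (x t)) (-‖gradient f (x t)‖^2) t := by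
    intro t ht
    have h1 := ((hdiff (x t)).hasGradientAt.hasFDerivAt).comp_hasDerivAt t (hx t ht)
    convert h1 using 1
    case e'_4 => rfl
    case e'_5 => rfl
    case e'_8 => rfl
    rw [InnerProductSpace.toDual_apply_apply, inner_neg_right, real_inner_self_eq_norm_sq]
  have hFmono : ∀ t, 0 ≤ t → f (x t) ≤ f (x 0) :=
    mono_aux _ _ hF (fun t _ => neg_nonpos.mpr (sq_nonneg _))
  -- G := ‖x t - x*‖²
  set G : ℝ → ℝ := fun t => ‖x t - xstar‖^2 with hG
  have hGderiv : ∀ t ∈ Set.Ici (0:ℝ),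
      HasDerivAt G (2 * ⟪x t - xstar, -(gradient f (x t))⟫) t := by
    intro t ht
    have hd : HasDerivAt (fun t => x t - xstar) (-(gradient f (x t))) t :=
      (hx t ht).sub_const xstar
    have h1 := HasDerivAt.inner ℝ hd hd
    have h2 : ∀ s, ⟪x s - xstar, x s - xstar⟫ = G s := fun s =>
      real_inner_self_eq_norm_sq _
    have h3 : HasDerivAt (fun s => ⟪x s - xstar, x s - xstar⟫)
        (2 * ⟪x t - xstar, -(gradient f (x t))⟫) t := by
      convert h1 using 1
      case e'_4 => rfl
      case e'_5 => rfl
      rw [real_inner_comm (x t - xstar) (-(gradient f (x t)))]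
      ring
    exact (funext h2 : (fun s => ⟪x s - xstar, x s - xstar⟫) = G) ▸ h3
  -- key pointwise bound : G' ≤ -2r G
  have hkey : ∀ t, 0 ≤ t → 2 * ⟪x t - xstar, -(gradient f (x t))⟫ ≤ -(2*r) * G t := by
    intro t ht
    have hac := hAC (x t)
    have hpl := hPL (x t)
    have hlow := hQGlow (x t)
    set g := ‖gradient f (x t)‖ with hg
    set n := ‖x t - xstar‖ with hn
    have hgn : 0 ≤ g := norm_nonneg _
    have hnn : 0 ≤ n := norm_nonneg _
    have hs : Real.sqrt (μ * μ₀) ^ 2 = μ * μ₀ :=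
      Real.sq_sqrt (le_of_lt (mul_pos hμ hμ₀))
    have hsnn : 0 ≤ Real.sqrt (μ * μ₀) := Real.sqrt_nonneg _
    have hg2 : g ^ 2 ≥ (Real.sqrt (μ * μ₀)) ^ 2 * n ^ 2 := by nlinarith
    have hgge : g ≥ Real.sqrt (μ * μ₀) * n := by
      nlinarith [sq_nonneg (g - Real.sqrt (μ*μ₀) * n), sq_nonneg (g + Real.sqrt (μ*μ₀) * n),
        mul_nonneg hsnn hnn]
    have hinner : ⟪gradient f (x t), x t - xstar⟫ ≥ r * n ^ 2 := by
      have h1 : a * g * n ≥ a * (Real.sqrt (μ * μ₀) * n) * n := by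
        have := mul_le_mul_of_nonneg_right (mul_le_mul_of_nonneg_left hgge (le_of_lt ha0)) hnn
        linarith
      have h2 : a * (Real.sqrt (μ * μ₀) * n) * n = r * n ^ 2 := by rw [hr]; ring
      linarith
    have hflip : ⟪x t - xstar, -(gradient f (x t))⟫ = -⟪gradient f (x t), x t - xstar⟫ := by
      rw [inner_neg_right, real_inner_comm]
    rw [hflip]
    have hGt : G t = n ^ 2 := rfl
    rw [hGt]; linarith
  -- Gronwall : G t ≤ G 0 * exp (-2 r t)
  have hGbound : ∀ t, 0 ≤ t → G t ≤ G 0 * Real.exp (-(2*r) * t) := by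
    have hH : ∀ t ∈ Set.Ici (0:ℝ), HasDerivAt (fun t => G t * Real.exp (2*r*t))
        (2 * ⟪x t - xstar, -(gradient f (x t))⟫ * Real.exp (2*r*t)
          + G t * (Real.exp (2*r*t) * (2*r))) t := by
      intro t ht
      have hlin : HasDerivAt (fun t : ℝ => 2*r*t) (2*r) t := by
        simpa using (hasDerivAt_id t).const_mul (2*r)
      have he := hlin.exp
      exact (hGderiv t ht).mul he
    have hH' : ∀ t ∈ Set.Ici (0:ℝ),
        2 * ⟪x t - xstar, -(gradient f (x t))⟫ * Real.exp (2*r*t)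
          + G t * (Real.exp (2*r*t) * (2*r)) ≤ 0 := by
      intro t ht
      have h1 := hkey t ht
      have he : (0:ℝ) < Real.exp (2*r*t) := Real.exp_pos _
      nlinarith [mul_le_mul_of_nonneg_right h1 he.le]
    intro t ht
    have hmon := mono_aux _ _ hH hH' t ht
    simp only [mul_zero, Real.exp_zero, mul_one] at hmon
    have he : (0:ℝ) < Real.exp (2*r*t) := Real.exp_pos _
    rw [neg_mul, Real.exp_neg, ← div_eq_mul_inv, le_div_iff₀ he]
    linarith
  -- final combination
  intro t ht
  have hF0 : 0 ≤ f (x 0) - f xstar := sub_nonneg.mpr (hmin (x 0))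
  have hFt0 : 0 ≤ f (x t) - f xstar := sub_nonneg.mpr (hmin (x t))
  have hFt : f (x t) - f xstar ≤ f (x 0) - f xstar := by linarith [hFmono t ht]
  have hup : f (x t) - f xstar ≤ L₀/2 * G t := hQGup (x t)
  have hG0 : G 0 ≤ 2/μ₀ * (f (x 0) - f xstar) := by
    have h := hQGlow (x 0)
    rw [ge_iff_le] at h
    have hg0 : G 0 = ‖x 0 - xstar‖^2 := rfl
    rw [hg0, ← sub_nonneg]
    have heq : 2/μ₀ * (f (x 0) - f xstar) - ‖x 0 - xstar‖^2
        = (2/μ₀) * ((f (x 0) - f xstar) - μ₀/2 * ‖x 0 - xstar‖^2) := by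
      field_simp
    rw [heq]
    exact mul_nonneg (by positivity) (by linarith)
  set κ : ℝ := Real.sqrt (L₀ / μ₀) with hκ
  have hκnn : 0 ≤ κ := Real.sqrt_nonneg _
  have hκsq : κ ^ 2 = L₀ / μ₀ := Real.sq_sqrt (le_of_lt (div_pos hL₀ hμ₀))
  set E : ℝ := Real.exp (-r * t) with hE
  have hEpos : 0 < E := Real.exp_pos _
  have hexp2 : Real.exp (-(2*r) * t) = E ^ 2 := by
    have h0 : -(2*r) * t = (-r*t) + (-r*t) := by ring
    rw [h0, Real.exp_add, hE]; ring
  have hchain : f (x t) - f xstar ≤ κ^2 * E^2 * (f (x 0) - f xstar) := by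
    have h1 := hGbound t ht
    rw [hexp2] at h1
    have h2 : L₀/2 * G t ≤ L₀/2 * (G 0 * E^2) :=
      mul_le_mul_of_nonneg_left h1 (by linarith)
    have h3 : L₀/2 * (G 0 * E^2) ≤ L₀/2 * (2/μ₀ * (f (x 0) - f xstar) * E^2) := by
      have := mul_le_mul_of_nonneg_right hG0 (le_of_lt (pow_pos hEpos 2))
      nlinarith
    have h4 : L₀/2 * (2/μ₀ * (f (x 0) - f xstar) * E^2) = κ^2 * E^2 * (f (x 0) - f xstar) := by
      rw [hκsq]; field_simp
    linarith
  have hAnn : 0 ≤ κ * E := mul_nonneg hκnn hEpos.le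
  have hgoal : f (x t) - f xstar ≤ (1 + κ) * E * (f (x 0) - f xstar) := by
    rcases le_or_gt (κ * E) 1 with hA | hA
    · have h7 : (κ*E)*(κ*E) ≤ κ*E := by nlinarith
      have h8 : κ^2*E^2*(f (x 0) - f xstar) ≤ (κ*E)*(f (x 0) - f xstar) := by
        have := mul_le_mul_of_nonneg_right h7 hF0
        nlinarith
      have h9 : (κ*E)*(f (x 0) - f xstar) ≤ (1+κ)*E*(f (x 0) - f xstar) := by
        have hE1 : κ*E ≤ (1+κ)*E := by nlinarith
        exact mul_le_mul_of_nonneg_right hE1 hF0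
      linarith
    · have h8 : (1:ℝ) ≤ (1+κ)*E := by nlinarith
      have h9 := mul_le_mul_of_nonneg_right h8 hF0
      rw [one_mul] at h9
      linarith
  have hEeq : Real.exp (-a * Real.sqrt (μ * μ₀) * t) = E := by
    rw [hE]; congr 1; rw [hr]; ring
  rw [hEeq]
  exact hgoal
end

section
/- Let f : ℝ^d → ℝ be C¹ with global minimizer x*, minimum value f*, satisfying: the descent inequality f(x - (1/L)∇f(x)) ≤ f(x) - (1/(2L))‖∇f(x)‖² for all x; PL with constant μ; aiming condition with constant a; lower quadratic growth with constant μ₀ ≤ L; upper quadratic growth with constant L₀ ≤ L. Let x_{k+1} = x_k - (1/L)∇f(x_k). Then for all k, f(x_k) - f* ≤ (1 + √(L₀/μ₀))·(1 - a√(μμ₀)/L)^k·(f(x_0) - f*). -/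
open scoped RealInnerProductSpace

private lemma gd_step_arith (L a q q0 l0 n r F ip fp : ℝ) (hL : 0 < L)
    (hnn : 0 ≤ n) (hrn : 0 ≤ r) (ha0 : 0 < a)
    (hcL : q0 * l0 ≤ L) (hq0 : 0 < q0) (hl0 : 0 < l0)
    (hip : a * n * r ≤ ip)
    (hfp : fp ≤ F - 1/(2*L) * n^2)
    (hnr2 : q*F + q*q0*l0/2 * r^2 ≤ l0 * (n*r)) :
    fp + q0*l0/2 * (r^2 - 2*(1/L)*ip + (1/L)^2 * n^2)
      ≤ (1 - a*(q*q0)/L) * (F + q0*l0/2 * r^2) := by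
  have hipm : q0*l0/L * (a*n*r) ≤ q0*l0/L * ip :=
    mul_le_mul_of_nonneg_left hip (by positivity)
  have hcomb : 2*a*q0*L * (q*F + q*q0*l0/2*r^2) ≤ 2*a*q0*L * (l0*(n*r)) :=
    mul_le_mul_of_nonneg_left hnr2 (by positivity)
  have hn2 : 0 ≤ n^2 * (L - q0*l0) := mul_nonneg (sq_nonneg n) (by linarith)
  have hid : (1 - a*(q*q0)/L) * (F + q0*l0/2 * r^2) -
      ((F - 1/(2*L)*n^2) + q0*l0/2 * (r^2 - 2*(1/L)*(a*n*r) + (1/L)^2 * n^2))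
      = (2*a*q0*L*(l0*(n*r)) - 2*a*q0*L*(q*F + q*q0*l0/2*r^2)) / (2*L^2)
        + n^2 * (L - q0*l0) / (2*L^2) := by
    field_simp
    ring
  have h0 : 0 ≤ (1 - a*(q*q0)/L) * (F + q0*l0/2 * r^2) -
      ((F - 1/(2*L)*n^2) + q0*l0/2 * (r^2 - 2*(1/L)*(a*n*r) + (1/L)^2 * n^2)) := by
    rw [hid]
    have h1 : 0 ≤ (2*a*q0*L*(l0*(n*r)) - 2*a*q0*L*(q*F + q*q0*l0/2*r^2)) / (2*L^2) := by
      apply div_nonneg (by linarith) (by positivity)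
    have h2 : 0 ≤ n^2 * (L - q0*l0) / (2*L^2) := div_nonneg hn2 (by positivity)
    linarith
  ring_nf at hipm hfp h0 ⊢
  linarith [hipm, hfp, h0]

set_option maxHeartbeats 1000000 in
theorem gradient_descent_PL_AC_convergence {d : ℕ} (f : EuclideanSpace ℝ (Fin d) → ℝ)
    (μ μ₀ L₀ L a : ℝ) (hμ : 0 < μ) (hμμ₀ : μ ≤ μ₀) (hμ₀L₀ : μ₀ ≤ L₀) (hL₀L : L₀ ≤ L)
    (ha : a ∈ Set.Ioc (0 : ℝ) 1) (hf : ContDiff ℝ 1 f)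
    (xstar : EuclideanSpace ℝ (Fin d)) (hmin : ∀ y, f xstar ≤ f y)
    (hdescent : ∀ x : EuclideanSpace ℝ (Fin d),
      f (x - (1 / L) • gradient f x) ≤ f x - 1 / (2 * L) * ‖gradient f x‖ ^ 2)
    (hPL : ∀ x, ‖gradient f x‖ ^ 2 ≥ 2 * μ * (f x - f xstar))
    (hAC : ∀ x, ⟪gradient f x, x - xstar⟫ ≥ a * ‖gradient f x‖ * ‖x - xstar‖)
    (hQGlow : ∀ x, f x - f xstar ≥ μ₀ / 2 * ‖x - xstar‖ ^ 2)
    (hQGup : ∀ x, f x - f xstar ≤ L₀ / 2 * ‖x - xstar‖ ^ 2)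
    (x : ℕ → EuclideanSpace ℝ (Fin d))
    (hiter : ∀ k, x (k + 1) = x k - (1 / L) • gradient f (x k)) :
    ∀ k, f (x k) - f xstar ≤
      (1 + Real.sqrt (L₀ / μ₀)) * (1 - a * Real.sqrt (μ * μ₀) / L) ^ k
        * (f (x 0) - f xstar) := by
  obtain ⟨ha0, ha1⟩ := ha
  have hμ₀ : 0 < μ₀ := lt_of_lt_of_le hμ hμμ₀
  have hL₀ : 0 < L₀ := lt_of_lt_of_le hμ₀ hμ₀L₀
  have hL : 0 < L := lt_of_lt_of_le hL₀ hL₀L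
  set q := Real.sqrt μ with hq
  set q0 := Real.sqrt μ₀ with hq0def
  set l0 := Real.sqrt L₀ with hl0def
  have hq2 : q^2 = μ := Real.sq_sqrt hμ.le
  have hq02 : q0^2 = μ₀ := Real.sq_sqrt hμ₀.le
  have hl02 : l0^2 = L₀ := Real.sq_sqrt hL₀.le
  have hqpos : 0 < q := Real.sqrt_pos.2 hμ
  have hq0pos : 0 < q0 := Real.sqrt_pos.2 hμ₀
  have hl0pos : 0 < l0 := Real.sqrt_pos.2 hL₀
  have hs : Real.sqrt (μ * μ₀) = q * q0 := Real.sqrt_mul hμ.le μ₀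
  have hqq0 : q ≤ q0 := Real.sqrt_le_sqrt hμμ₀
  have hq0l0 : q0 ≤ l0 := Real.sqrt_le_sqrt hμ₀L₀
  have hc_le : q0 * l0 ≤ L := by nlinarith
  have hs_le : q * q0 ≤ L := by nlinarith
  have hF : ∀ y, (0:ℝ) ≤ f y - f xstar := fun y => sub_nonneg.2 (hmin y)
  set E : ℕ → ℝ := fun k => f (x k) - f xstar + q0*l0/2 * ‖x k - xstar‖^2 with hE
  set ρ := 1 - a * Real.sqrt (μ * μ₀) / L with hρdef
  have hρeq : ρ = 1 - a * (q * q0) / L := by rw [hρdef, hs]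
  have hρ0 : 0 ≤ ρ := by
    rw [hρeq, sub_nonneg, div_le_one hL]
    nlinarith
  have key : ∀ k, E (k+1) ≤ ρ * E k := by
    intro k
    set g := gradient f (x k) with hg
    set n := ‖g‖ with hn
    set r := ‖x k - xstar‖ with hr
    set F := f (x k) - f xstar with hFdef
    have hnn : 0 ≤ n := norm_nonneg _
    have hrn : 0 ≤ r := norm_nonneg _
    have hFn : 0 ≤ F := hF _
    have hPLk : n^2 ≥ 2*μ*F := hPL _
    have hlow : F ≥ μ₀/2 * r^2 := hQGlow _
    have hup : F ≤ L₀/2 * r^2 := hQGup _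
    have hACk : ⟪g, x k - xstar⟫ ≥ a * n * r := hAC _
    have hn_ge : q * q0 * r ≤ n := by
      have e : (q*q0*r)^2 = μ * (μ₀ * r^2) := by
        rw [mul_pow, mul_pow, hq2, hq02]; ring
      have h2 : (q*q0*r)^2 ≤ n^2 := by rw [e]; nlinarith
      have := Real.sqrt_le_sqrt h2
      rwa [Real.sqrt_sq (by positivity), Real.sqrt_sq hnn] at this
    have hB : 2*q*F ≤ l0 * (n * r) := by
      set u := Real.sqrt (2*F) with hu
      have hu2 : u^2 = 2*F := Real.sq_sqrt (by linarith)
      have hun : 0 ≤ u := Real.sqrt_nonneg _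
      have h1 : q * u ≤ n := by
        have h2 : (q*u)^2 ≤ n^2 := by
          have e : (q*u)^2 = μ * (2*F) := by rw [mul_pow, hq2, hu2]
          rw [e]; nlinarith
        have := Real.sqrt_le_sqrt h2
        rwa [Real.sqrt_sq (by positivity), Real.sqrt_sq hnn] at this
      have h2 : u ≤ l0 * r := by
        have h3 : u^2 ≤ (l0*r)^2 := by
          have e : (l0*r)^2 = L₀ * r^2 := by rw [mul_pow, hl02]
          rw [e, hu2]; nlinarith
        have := Real.sqrt_le_sqrt h3
        rwa [Real.sqrt_sq hun, Real.sqrt_sq (by positivity)] at this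
      calc 2*q*F = (q*u)*u := by rw [show (q*u)*u = q*u^2 by ring, hu2]; ring
        _ ≤ n * (l0 * r) := mul_le_mul h1 h2 hun hnn
        _ = l0 * (n * r) := by ring
    have hnr2 : q*F + q*q0*l0/2 * r^2 ≤ l0 * (n*r) := by
      have hh : l0 * (q*q0*r*r) ≤ l0 * (n*r) := by
        apply mul_le_mul_of_nonneg_left _ hl0pos.le
        exact mul_le_mul_of_nonneg_right hn_ge hrn
      nlinarith [hh, hB]
    have hx1 : x (k+1) - xstar = (x k - xstar) - (1/L) • g := by
      rw [hiter k]; abel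
    have hexp : ‖x (k+1) - xstar‖^2 = r^2 - 2*(1/L)*⟪g, x k - xstar⟫ + (1/L)^2 * n^2 := by
      rw [hx1, norm_sub_sq_real, real_inner_smul_right, real_inner_comm, norm_smul,
        Real.norm_eq_abs, abs_of_pos (by positivity : (0:ℝ) < 1/L)]
      ring
    have hfy : f (x (k+1)) - f xstar ≤ F - 1/(2*L)*n^2 := by
      rw [hiter k, hFdef]
      have := hdescent (x k)
      linarith
    show f (x (k+1)) - f xstar + q0*l0/2 * ‖x (k+1) - xstar‖^2 ≤ ρ * (F + q0*l0/2 * r^2)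
    rw [hexp, hρeq]
    exact gd_step_arith L a q q0 l0 n r F _ _ hL hnn hrn ha0 hc_le hq0pos hl0pos
      hACk hfy hnr2
  have hEk : ∀ k, E k ≤ ρ^k * E 0 := by
    intro k
    induction k with
    | zero => simp
    | succ k ih =>
      calc E (k+1) ≤ ρ * E k := key k
        _ ≤ ρ * (ρ^k * E 0) := mul_le_mul_of_nonneg_left ih hρ0
        _ = ρ^(k+1) * E 0 := by ring
  have hE0 : E 0 ≤ (1 + Real.sqrt (L₀/μ₀)) * (f (x 0) - f xstar) := by
    have hsq : Real.sqrt (L₀/μ₀) = l0/q0 := Real.sqrt_div hL₀.le μ₀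
    have hr0 : μ₀/2 * ‖x 0 - xstar‖^2 ≤ f (x 0) - f xstar := hQGlow _
    have hmm : l0/q0 * (μ₀/2 * ‖x 0 - xstar‖^2) = q0*l0/2 * ‖x 0 - xstar‖^2 := by
      rw [← hq02]; field_simp
    have h2 : l0/q0 * (μ₀/2 * ‖x 0 - xstar‖^2) ≤ l0/q0 * (f (x 0) - f xstar) :=
      mul_le_mul_of_nonneg_left hr0 (by positivity)
    rw [hsq]
    show f (x 0) - f xstar + q0*l0/2 * ‖x 0 - xstar‖^2 ≤ (1 + l0/q0) * (f (x 0) - f xstar)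
    nlinarith [h2, hmm]
  intro k
  have h1 : f (x k) - f xstar ≤ E k := by
    have h2 : 0 ≤ q0*l0/2 * ‖x k - xstar‖^2 := by positivity
    show f (x k) - f xstar ≤ f (x k) - f xstar + q0*l0/2 * ‖x k - xstar‖^2
    linarith
  calc f (x k) - f xstar ≤ E k := h1
    _ ≤ ρ^k * E 0 := hEk k
    _ ≤ ρ^k * ((1 + Real.sqrt (L₀/μ₀)) * (f (x 0) - f xstar)) :=
        mul_le_mul_of_nonneg_left hE0 (pow_nonneg hρ0 k)
    _ = (1 + Real.sqrt (L₀/μ₀)) * ρ^k * (f (x 0) - f xstar) := by ring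
end

section
/- Let f : ℝ^d → ℝ be C¹, (τ,μ)-strongly quasar-convex with respect to minimizer x* (f* ≥ f(x) + (1/τ)⟨∇f(x),x*-x⟩ + (μ/2)‖x-x*‖²), and let x : ℝ≥0 → ℝ^d solve gradient flow x'(t) = -∇f(x(t)). Then the Lyapunov function E(t) = f(x(t)) - f* + (μ/2)‖x(t)-x*‖² satisfies E(t) ≤ e^{-τμt}E(0), and in particular f(x(t)) - f* ≤ e^{-τμt}·(f(x(0)) - f* + (μ/2)‖x(0)-x*‖²). -/
open scoped RealInnerProductSpace

theorem gradient_flow_sqc_convergence {d : ℕ} (f : EuclideanSpace ℝ (Fin d) → ℝ)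
    (τ μ : ℝ) (hτ : τ ∈ Set.Ioc (0 : ℝ) 1) (hμ : 0 < μ) (hf : ContDiff ℝ 1 f)
    (xstar : EuclideanSpace ℝ (Fin d)) (hmin : ∀ y, f xstar ≤ f y)
    (hsqc : ∀ x, f xstar ≥
      f x + (1 / τ) * ⟪gradient f x, xstar - x⟫ + μ / 2 * ‖x - xstar‖ ^ 2)
    (x : ℝ → EuclideanSpace ℝ (Fin d))
    (hx : ∀ t, 0 ≤ t → HasDerivAt x (-(gradient f (x t))) t) :
    (∀ t, 0 ≤ t →
      f (x t) - f xstar + μ / 2 * ‖x t - xstar‖ ^ 2 ≤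
        Real.exp (-τ * μ * t) * (f (x 0) - f xstar + μ / 2 * ‖x 0 - xstar‖ ^ 2)) ∧
    (∀ t, 0 ≤ t →
      f (x t) - f xstar ≤
        Real.exp (-τ * μ * t) * (f (x 0) - f xstar + μ / 2 * ‖x 0 - xstar‖ ^ 2)) := by
  obtain ⟨hτ0, hτ1⟩ := hτ
  set E : ℝ → ℝ := fun t => f (x t) - f xstar + μ / 2 * ‖x t - xstar‖ ^ 2 with hE
  have hE0 : ∀ t, 0 ≤ E t := fun t => by
    have h1 : 0 ≤ f (x t) - f xstar := sub_nonneg.2 (hmin _)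
    have h2 : 0 ≤ μ / 2 * ‖x t - xstar‖ ^ 2 := by positivity
    simpa [hE] using add_nonneg h1 h2
  -- derivative of E
  have hEderiv : ∀ t, 0 ≤ t → HasDerivAt E
      (⟪gradient f (x t), -(gradient f (x t))⟫ +
        μ / 2 * (⟪x t - xstar, -(gradient f (x t))⟫ + ⟪-(gradient f (x t)), x t - xstar⟫)) t := by
    intro t ht
    have hfx : HasDerivAt (fun s => f (x s)) ⟪gradient f (x t), -(gradient f (x t))⟫ t := by
      have hg : HasGradientAt f (gradient f (x t)) (x t) :=
        ((hf.differentiable one_ne_zero) (x t)).hasGradientAt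
      have := hg.hasFDerivAt.comp_hasDerivAt t (hx t ht)
      simpa only [Function.comp_def, InnerProductSpace.toDual_apply_apply] using this
    have hnorm : HasDerivAt (fun s => ‖x s - xstar‖ ^ 2)
        (⟪x t - xstar, -(gradient f (x t))⟫ + ⟪-(gradient f (x t)), x t - xstar⟫) t := by
      have hsub : HasDerivAt (fun s => x s - xstar) (-(gradient f (x t))) t :=
        (hx t ht).sub_const xstar
      have := hsub.inner ℝ hsub
      have heq : (fun s => ⟪x s - xstar, x s - xstar⟫) = fun s => ‖x s - xstar‖ ^ 2 := by
        funext s; rw [real_inner_self_eq_norm_sq]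
      rwa [heq] at this
    have := hfx.sub_const (f xstar)
    exact this.add (hnorm.const_mul (μ / 2))
  -- E' ≤ -τμ E
  have hEbound : ∀ t, 0 ≤ t →
      ⟪gradient f (x t), -(gradient f (x t))⟫ +
        μ / 2 * (⟪x t - xstar, -(gradient f (x t))⟫ + ⟪-(gradient f (x t)), x t - xstar⟫)
        ≤ -(τ * μ) * E t := by
    intro t ht
    have hq := hsqc (x t)
    have hτE : τ * E t ≤ ⟪gradient f (x t), x t - xstar⟫ := by
      have h1 : (1 / τ) * ⟪gradient f (x t), xstar - x t⟫ ≤ -(f (x t) - f xstar + μ / 2 * ‖x t - xstar‖ ^ 2) := by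
        linarith [hq]
      have h2 : ⟪gradient f (x t), xstar - x t⟫ = -⟪gradient f (x t), x t - xstar⟫ := by
        rw [← inner_neg_right]; congr 1; abel
      rw [h2] at h1
      have h3 : (1 / τ) * ⟪gradient f (x t), x t - xstar⟫ ≥ E t := by
        simp only [mul_neg] at h1; simpa [hE] using neg_le_neg h1
      calc τ * E t ≤ τ * ((1 / τ) * ⟪gradient f (x t), x t - xstar⟫) := by
            exact mul_le_mul_of_nonneg_left h3 hτ0.le
        _ = ⟪gradient f (x t), x t - xstar⟫ := by field_simp
    have hns : ⟪gradient f (x t), -(gradient f (x t))⟫ ≤ 0 := by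
      rw [inner_neg_right, real_inner_self_eq_norm_sq]
      exact neg_nonpos.2 (by positivity)
    have hrw : ⟪x t - xstar, -(gradient f (x t))⟫ + ⟪-(gradient f (x t)), x t - xstar⟫
        = -(2 * ⟪gradient f (x t), x t - xstar⟫) := by
      rw [inner_neg_right, inner_neg_left, real_inner_comm (x t - xstar)]; ring
    rw [hrw]
    have : μ / 2 * -(2 * ⟪gradient f (x t), x t - xstar⟫) ≤ μ / 2 * -(2 * (τ * E t)) := by
      apply mul_le_mul_of_nonneg_left _ (by positivity)
      linarith
    nlinarith
  -- g := exp(τμ t) * E t is antitone on Ici 0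
  set g : ℝ → ℝ := fun t => Real.exp (τ * μ * t) * E t with hg
  have hgderiv : ∀ t, 0 ≤ t → HasDerivAt g
      (τ * μ * Real.exp (τ * μ * t) * E t + Real.exp (τ * μ * t) *
        (⟪gradient f (x t), -(gradient f (x t))⟫ +
          μ / 2 * (⟪x t - xstar, -(gradient f (x t))⟫ + ⟪-(gradient f (x t)), x t - xstar⟫))) t := by
    intro t ht
    have hexp : HasDerivAt (fun s => Real.exp (τ * μ * s)) (τ * μ * Real.exp (τ * μ * t)) t := by
      simpa [mul_comm] using ((hasDerivAt_id t).const_mul (τ * μ)).exp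
    exact hexp.mul (hEderiv t ht)
  have hanti : AntitoneOn g (Set.Ici 0) := by
    apply antitoneOn_of_deriv_nonpos (convex_Ici 0)
    · intro t ht
      exact (hgderiv t ht).continuousAt.continuousWithinAt
    · intro t ht
      rw [interior_Ici] at ht
      exact (hgderiv t (le_of_lt ht)).differentiableAt.differentiableWithinAt
    · intro t ht
      rw [interior_Ici] at ht
      rw [(hgderiv t ht.le).deriv]
      have hb := hEbound t ht.le
      have hexp : (0:ℝ) < Real.exp (τ * μ * t) := Real.exp_pos _
      nlinarith [mul_le_mul_of_nonneg_left hb hexp.le]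
  have key : ∀ t, 0 ≤ t → E t ≤ Real.exp (-τ * μ * t) * E 0 := by
    intro t ht
    have := hanti (Set.self_mem_Ici) ht ht
    simp only [hg, mul_zero, Real.exp_zero, one_mul] at this
    have hexp : (0:ℝ) < Real.exp (τ * μ * t) := Real.exp_pos _
    rw [show (-τ * μ * t) = -(τ * μ * t) by ring, Real.exp_neg]
    have h4 := (le_div_iff₀' hexp).2 this
    simpa [div_eq_inv_mul] using h4
  refine ⟨fun t ht => key t ht, fun t ht => ?_⟩
  have := key t ht
  have h2 : 0 ≤ μ / 2 * ‖x t - xstar‖ ^ 2 := by positivity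
  simp only [hE] at this
  linarith
end

section
/- Let f : ℝ^d → ℝ be C¹ with PL constant μ > 0 and minimum f*. Let (x,z) : ℝ≥0 → ℝ^d × ℝ^d solve the coupled ODE system x'(t) = η(z(t)-x(t)) - γ∇f(x(t)), z'(t) = η'(x(t)-z(t)) - γ'∇f(x(t)), with constants η, η' ≥ 0, γ' > γ ≥ 0 satisfying η + η' = μγ. Then with δ = η/(γ'-γ), the energy E(t) = f(x(t)) - f* + (δ/2)‖x(t)-z(t)‖² satisfies E(t) ≤ e^{-2μγt}E(0); in particular f(x(t)) - f* ≤ e^{-2μγt}E(0). -/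
open scoped RealInnerProductSpace

theorem nesterov_ode_PL_convergence {d : ℕ} (f : EuclideanSpace ℝ (Fin d) → ℝ)
    (μ η η' γ γ' : ℝ) (hμ : 0 < μ) (hη : 0 ≤ η) (hη' : 0 ≤ η')
    (hγ : 0 ≤ γ) (hγγ' : γ < γ') (hparam : η + η' = μ * γ)
    (hf : ContDiff ℝ 1 f)
    (fstar : ℝ) (hfstar : ∀ y, fstar ≤ f y)
    (hPL : ∀ x, ‖gradient f x‖ ^ 2 ≥ 2 * μ * (f x - fstar))
    (x z : ℝ → EuclideanSpace ℝ (Fin d))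
    (hx : ∀ t, 0 ≤ t → HasDerivAt x (η • (z t - x t) - γ • gradient f (x t)) t)
    (hz : ∀ t, 0 ≤ t → HasDerivAt z (η' • (x t - z t) - γ' • gradient f (x t)) t) :
    (∀ t, 0 ≤ t →
      f (x t) - fstar + (η / (γ' - γ)) / 2 * ‖x t - z t‖ ^ 2 ≤
        Real.exp (-2 * μ * γ * t) *
          (f (x 0) - fstar + (η / (γ' - γ)) / 2 * ‖x 0 - z 0‖ ^ 2)) ∧
    (∀ t, 0 ≤ t →
      f (x t) - fstar ≤
        Real.exp (-2 * μ * γ * t) *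
          (f (x 0) - fstar + (η / (γ' - γ)) / 2 * ‖x 0 - z 0‖ ^ 2)) := by
  have hγ'γ : (0:ℝ) < γ' - γ := sub_pos.mpr hγγ'
  set δ : ℝ := η / (γ' - γ) with hδdef
  have hδ : 0 ≤ δ := div_nonneg hη hγ'γ.le
  have hδγ : δ * (γ' - γ) = η := div_mul_cancel₀ η hγ'γ.ne'
  set g : EuclideanSpace ℝ (Fin d) → EuclideanSpace ℝ (Fin d) := gradient f with hgdef
  set E : ℝ → ℝ := fun t => f (x t) - fstar + δ / 2 * ‖x t - z t‖ ^ 2 with hEdef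
  set D : ℝ → ℝ := fun t => -γ * ‖g (x t)‖ ^ 2 - δ * (μ * γ) * ‖x t - z t‖ ^ 2 with hDdef
  have hgrad : ∀ y, HasGradientAt f (g y) y := fun y =>
    ((hf.differentiable one_ne_zero) y).hasGradientAt
  have key : ∀ t, 0 ≤ t → HasDerivAt E (D t) t := by
    intro t ht
    have hfun : E = fun s => (f (x s) + δ / 2 * ⟪x s - z s, x s - z s⟫) - fstar := by
      funext s; simp only [hEdef, real_inner_self_eq_norm_sq]; ring
    rw [hfun]
    have hfx := (hgrad (x t)).hasFDerivAt.comp_hasDerivAt t (hx t ht)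
    have hn := ((hx t ht).sub (hz t ht)).inner ℝ ((hx t ht).sub (hz t ht))
    have hX : η • (z t - x t) - γ • g (x t) =
        (-η) • (x t - z t) + (-γ) • g (x t) := by module
    have hW : (η • (z t - x t) - γ • g (x t)) - (η' • (x t - z t) - γ' • g (x t)) =
        (-(η + η')) • (x t - z t) + (γ' - γ) • g (x t) := by module
    have := (hfx.add (hn.const_mul (δ / 2))).sub_const fstar
    rw [hW, hX] at this
    refine this.congr_deriv (Eq.symm ?_)
    simp only [hDdef, InnerProductSpace.toDual_apply_apply, inner_add_left, inner_add_right,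
      real_inner_smul_left, real_inner_smul_right, real_inner_self_eq_norm_sq,
      real_inner_comm (g (x t)) (x t - z t), Pi.sub_apply]
    linear_combination (-⟪g (x t), x t - z t⟫) * hδγ + δ * ‖x t - z t‖ ^ 2 * hparam
  have hDle : ∀ t, 0 ≤ t → D t ≤ -(2 * μ * γ) * E t := by
    intro t ht
    have h1 := hPL (x t)
    have h2 : γ * (2 * μ * (f (x t) - fstar)) ≤ γ * ‖g (x t)‖ ^ 2 :=
      mul_le_mul_of_nonneg_left h1 hγ
    have h3 : (0:ℝ) ≤ ‖x t - z t‖ ^ 2 := sq_nonneg _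
    simp only [hDdef, hEdef]
    nlinarith
  set F : ℝ → ℝ := fun s => Real.exp (2 * μ * γ * s) * E s with hFdef
  have hF : ∀ t, 0 ≤ t → HasDerivAt F
      (2 * μ * γ * Real.exp (2 * μ * γ * t) * E t + Real.exp (2 * μ * γ * t) * D t) t := by
    intro t ht
    have hexp : HasDerivAt (fun s => Real.exp (2 * μ * γ * s))
        (Real.exp (2 * μ * γ * t) * (2 * μ * γ)) t := by
      simpa using ((hasDerivAt_id t).const_mul (2 * μ * γ)).exp
    have := hexp.mul (key t ht)
    refine this.congr_deriv (Eq.symm ?_)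
    ring
  have main : ∀ t, 0 ≤ t → F t ≤ F 0 := by
    intro t ht
    have hanti : AntitoneOn F (Set.Icc 0 t) := by
      apply antitoneOn_of_hasDerivWithinAt_nonpos (convex_Icc 0 t)
        (f' := fun s => 2 * μ * γ * Real.exp (2 * μ * γ * s) * E s +
          Real.exp (2 * μ * γ * s) * D s)
      · intro s hs
        exact (hF s hs.1).continuousAt.continuousWithinAt
      · intro s hs
        rw [interior_Icc] at hs
        exact (hF s hs.1.le).hasDerivWithinAt
      · intro s hs
        rw [interior_Icc] at hs
        have hD := hDle s hs.1.le
        have hexp : 0 < Real.exp (2 * μ * γ * s) := Real.exp_pos _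
        nlinarith
    have := hanti (Set.left_mem_Icc.mpr ht) (Set.right_mem_Icc.mpr ht) ht
    exact this
  have hE0 : F 0 = E 0 := by simp [hFdef]
  have conc1 : ∀ t, 0 ≤ t → E t ≤ Real.exp (-2 * μ * γ * t) * E 0 := by
    intro t ht
    have h := main t ht
    rw [hE0] at h
    have hpos : 0 < Real.exp (2 * μ * γ * t) := Real.exp_pos _
    have hmul : Real.exp (-2 * μ * γ * t) * Real.exp (2 * μ * γ * t) = 1 := by
      rw [← Real.exp_add, show -2 * μ * γ * t + 2 * μ * γ * t = 0 by ring, Real.exp_zero]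
    have hEt : E t = Real.exp (-2 * μ * γ * t) * F t := by
      simp only [hFdef, ← mul_assoc, hmul, one_mul]
    rw [hEt]
    have hpos2 : 0 < Real.exp (-2 * μ * γ * t) := Real.exp_pos _
    exact mul_le_mul_of_nonneg_left h hpos2.le
  refine ⟨fun t ht => conc1 t ht, fun t ht => ?_⟩
  have h1 := conc1 t ht
  have h2 : (0:ℝ) ≤ δ / 2 * ‖x t - z t‖ ^ 2 := by positivity
  simp only [hEdef] at h1
  linarith
end

section
/- Let f : ℝ^d → ℝ be C¹ with global minimizer x*, minimum f*, satisfying PL with constant μ, aiming condition with constant a, lower quadratic growth with constant μ₀, and upper quadratic growth with constant L₀. Let (x,z) solve x'(t) = η(z(t)-x(t)) - γ∇f(x(t)), z'(t) = η'(x(t)-z(t)) - γ'∇f(x(t)) with x(0) = z(0), γ ≥ 0, γ' = (μ₀L₀)^{-1/4}, η = (μ₀L₀)^{1/4}, η' = a(μ₀/L₀)^{1/4}√μ. Then f(x(t)) - f* ≤ (1 + √(L₀/μ₀))·(f(x(0)) - f*)·e^{-a(μ₀/L₀)^{1/4}√μ · t}. -/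
lemma core_scalar (m P Q F G r s : ℝ) (hm : 0 < m) (hP : 0 < P) (hQ : 0 < Q)
    (hF : 0 ≤ F) (hG : 0 ≤ G) (hr : 0 ≤ r) (hs : 0 ≤ s)
    (h1 : 2 * m ^ 2 * F ≤ G ^ 2) (h2 : P ^ 4 * r ^ 2 ≤ 2 * F)
    (h3 : 2 * F ≤ Q ^ 4 * r ^ 2) :
    F ≤ Q ^ 2 / m * (G * r) - P ^ 2 * Q ^ 2 * (s * r) + P ^ 2 * Q ^ 2 / 2 * s ^ 2 := by
  have h5 : 0 ≤ (Q ^ 2 - P ^ 2) * r ^ 2 := by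
    rcases eq_or_lt_of_le (sq_nonneg r) with h | h
    · rw [← h]; simp
    · have h4 : P ^ 4 * r ^ 2 ≤ Q ^ 4 * r ^ 2 := h2.trans h3
      have h6 : P ^ 4 ≤ Q ^ 4 := le_of_mul_le_mul_right (by linarith [h4]) h
      have h7 : P ^ 2 ≤ Q ^ 2 := by
        nlinarith [pow_pos hP 2, pow_pos hQ 2]
      exact mul_nonneg (by linarith) (sq_nonneg r)
  have hA : (2*F + P^2*Q^2*r^2)^2 ≤ 8*F*Q^4*r^2 := by
    nlinarith [mul_nonneg (sub_nonneg.mpr h2) (sub_nonneg.mpr h3),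
      mul_nonneg (mul_nonneg hF h5) (by positivity : (0:ℝ) ≤ 3*Q^2+P^2)]
  have key : (F + P ^ 2 * Q ^ 2 / 2 * r ^ 2) ^ 2 ≤ (Q ^ 2 / m * (G * r)) ^ 2 := by
    have hGr : 2*m^2*F*r^2 ≤ G^2*r^2 := mul_le_mul_of_nonneg_right h1 (sq_nonneg r)
    have hm2 : (0:ℝ) < m^2 := pow_pos hm 2
    have e : (Q^2/m*(G*r))^2 = Q^4/m^2*(G^2*r^2) := by field_simp
    rw [e]
    have e2 : Q^4/m^2*(2*m^2*F*r^2) ≤ Q^4/m^2*(G^2*r^2) :=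
      mul_le_mul_of_nonneg_left hGr (by positivity)
    have e3 : Q^4/m^2*(2*m^2*F*r^2) = 2*Q^4*F*r^2 := by field_simp
    nlinarith [hA]
  have hX : 0 ≤ F + P^2*Q^2/2*r^2 := by positivity
  have hY : 0 ≤ Q^2/m*(G*r) := by positivity
  have hXY : F + P^2*Q^2/2*r^2 ≤ Q^2/m*(G*r) := by
    have := Real.sqrt_le_sqrt key
    rwa [Real.sqrt_sq hX, Real.sqrt_sq hY] at this
  nlinarith [hXY, mul_nonneg (mul_nonneg (sq_nonneg P) (sq_nonneg Q)) (sq_nonneg (r - s))]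

open scoped RealInnerProductSpace

set_option maxHeartbeats 1600000 in
theorem nesterov_ode_PL_AC_acceleration {d : ℕ} (f : EuclideanSpace ℝ (Fin d) → ℝ)
    (μ μ₀ L₀ a γ : ℝ) (hμ : 0 < μ) (hμ₀ : 0 < μ₀) (hL₀ : 0 < L₀)
    (ha : a ∈ Set.Ioc (0 : ℝ) 1) (hγ : 0 ≤ γ) (hf : ContDiff ℝ 1 f)
    (xstar : EuclideanSpace ℝ (Fin d)) (hmin : ∀ y, f xstar ≤ f y)
    (hPL : ∀ x, ‖gradient f x‖ ^ 2 ≥ 2 * μ * (f x - f xstar))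
    (hAC : ∀ x, ⟪gradient f x, x - xstar⟫ ≥ a * ‖gradient f x‖ * ‖x - xstar‖)
    (hQGlow : ∀ x, f x - f xstar ≥ μ₀ / 2 * ‖x - xstar‖ ^ 2)
    (hQGup : ∀ x, f x - f xstar ≤ L₀ / 2 * ‖x - xstar‖ ^ 2)
    (x z : ℝ → EuclideanSpace ℝ (Fin d)) (hinit : x 0 = z 0)
    (hx : ∀ t, 0 ≤ t → HasDerivAt x
      (((μ₀ * L₀) ^ ((1 : ℝ) / 4)) • (z t - x t) - γ • gradient f (x t)) t)
    (hz : ∀ t, 0 ≤ t → HasDerivAt z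
      ((a * (μ₀ / L₀) ^ ((1 : ℝ) / 4) * Real.sqrt μ) • (x t - z t)
        - ((μ₀ * L₀) ^ (-(1 : ℝ) / 4)) • gradient f (x t)) t) :
    ∀ t, 0 ≤ t → f (x t) - f xstar ≤
      (1 + Real.sqrt (L₀ / μ₀)) * (f (x 0) - f xstar) *
        Real.exp (-(a * (μ₀ / L₀) ^ ((1 : ℝ) / 4) * Real.sqrt μ) * t) := by
  obtain ⟨ha0, ha1⟩ := ha
  set m := Real.sqrt μ with hm_def
  have hm : 0 < m := Real.sqrt_pos.mpr hμ
  have hm2 : m ^ 2 = μ := Real.sq_sqrt hμ.le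
  set P : ℝ := μ₀ ^ ((1:ℝ)/4) with hP_def
  set Q : ℝ := L₀ ^ ((1:ℝ)/4) with hQ_def
  have hP : 0 < P := Real.rpow_pos_of_pos hμ₀ _
  have hQ : 0 < Q := Real.rpow_pos_of_pos hL₀ _
  have hP4 : P ^ 4 = μ₀ := by
    rw [hP_def, ← Real.rpow_natCast (μ₀ ^ ((1:ℝ)/4)) 4, ← Real.rpow_mul hμ₀.le]
    norm_num
  have hQ4 : Q ^ 4 = L₀ := by
    rw [hQ_def, ← Real.rpow_natCast (L₀ ^ ((1:ℝ)/4)) 4, ← Real.rpow_mul hL₀.le]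
    norm_num
  have hPQ : (μ₀ * L₀) ^ ((1:ℝ)/4) = P * Q := Real.mul_rpow hμ₀.le hL₀.le
  have hPQdiv : (μ₀ / L₀) ^ ((1:ℝ)/4) = P / Q := Real.div_rpow hμ₀.le hL₀.le _
  have hPQinv : (μ₀ * L₀) ^ (-(1:ℝ)/4) = (P*Q)⁻¹ := by
    rw [show (-(1:ℝ)/4) = -((1:ℝ)/4) by norm_num, Real.rpow_neg (by positivity), hPQ]
  set c : ℝ := P^2 * Q^2 with hc_def
  have hc : 0 < c := by positivity
  set θ : ℝ := a * (P/Q) * m with hθ_def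
  have hθ : 0 < θ := by positivity
  have hθ_eq : a * (μ₀ / L₀) ^ ((1:ℝ)/4) * Real.sqrt μ = θ := by rw [hPQdiv]
  set V : ℝ → ℝ := fun t => f (x t) - f xstar + c/2 * ⟪z t - xstar, z t - xstar⟫ with hV_def
  set D : ℝ → ℝ := fun t =>
    ⟪gradient f (x t), ((μ₀ * L₀) ^ ((1 : ℝ) / 4)) • (z t - x t) - γ • gradient f (x t)⟫
    + c/2 * (⟪z t - xstar, (a * (μ₀ / L₀) ^ ((1 : ℝ) / 4) * Real.sqrt μ) • (x t - z t)
        - ((μ₀ * L₀) ^ (-(1 : ℝ) / 4)) • gradient f (x t)⟫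
      + ⟪(a * (μ₀ / L₀) ^ ((1 : ℝ) / 4) * Real.sqrt μ) • (x t - z t)
        - ((μ₀ * L₀) ^ (-(1 : ℝ) / 4)) • gradient f (x t), z t - xstar⟫) with hD_def
  have hVderiv : ∀ t, 0 ≤ t → HasDerivAt V (D t) t := by
    intro t ht
    have hgrad : HasFDerivAt f ((InnerProductSpace.toDual ℝ _) (gradient f (x t))) (x t) :=
      ((hf.differentiable one_ne_zero) (x t)).hasGradientAt.hasFDerivAt
    have h1 : HasDerivAt (fun s => f (x s))
        (⟪gradient f (x t), ((μ₀ * L₀) ^ ((1 : ℝ) / 4)) • (z t - x t) - γ • gradient f (x t)⟫) t := by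
      simpa [InnerProductSpace.toDual_apply_apply, Function.comp_def] using hgrad.comp_hasDerivAt t (hx t ht)
    have h2 : HasDerivAt (fun s => z s - xstar)
        ((a * (μ₀ / L₀) ^ ((1 : ℝ) / 4) * Real.sqrt μ) • (x t - z t)
          - ((μ₀ * L₀) ^ (-(1 : ℝ) / 4)) • gradient f (x t)) t := (hz t ht).sub_const xstar
    have h3 := h2.inner ℝ h2
    exact (h1.sub_const (f xstar)).add (h3.const_mul (c/2))
  have hkey : ∀ t, 0 ≤ t → D t + θ * V t ≤ 0 := by
    intro t ht
    set g := gradient f (x t) with hg_def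
    set u := x t - xstar with hu_def
    set w := z t - xstar with hw_def
    have hzx : z t - x t = w - u := by rw [hu_def, hw_def]; abel
    have hxz : x t - z t = u - w := by rw [hu_def, hw_def]; abel
    have hA : ⟪g, ((μ₀ * L₀) ^ ((1 : ℝ) / 4)) • (z t - x t) - γ • g⟫
        = P*Q*⟪g,w⟫ - P*Q*⟪g,u⟫ - γ*‖g‖^2 := by
      rw [hPQ, hzx, inner_sub_right, real_inner_smul_right, real_inner_smul_right,
        inner_sub_right, real_inner_self_eq_norm_sq]
      ring
    have hB : ⟪w, (a * (μ₀ / L₀) ^ ((1 : ℝ) / 4) * Real.sqrt μ) • (x t - z t)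
        - ((μ₀ * L₀) ^ (-(1 : ℝ) / 4)) • g⟫
        = θ*⟪w,u⟫ - θ*⟪w,w⟫ - (P*Q)⁻¹*⟪g,w⟫ := by
      rw [hPQdiv, hPQinv, hxz, inner_sub_right, real_inner_smul_right, real_inner_smul_right,
        inner_sub_right, real_inner_comm w g]
      ring
    have hB' : ⟪(a * (μ₀ / L₀) ^ ((1 : ℝ) / 4) * Real.sqrt μ) • (x t - z t)
        - ((μ₀ * L₀) ^ (-(1 : ℝ) / 4)) • g, w⟫
        = θ*⟪w,u⟫ - θ*⟪w,w⟫ - (P*Q)⁻¹*⟪g,w⟫ := by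
      rw [← hB, real_inner_comm]
    -- scalar facts
    have hF : 0 ≤ f (x t) - f xstar := sub_nonneg.mpr (hmin (x t))
    have hI1 : a * ‖g‖ * ‖u‖ ≤ ⟪g,u⟫ := hAC (x t)
    have hI2 : ⟪w,u⟫ ≤ ‖w‖ * ‖u‖ := real_inner_le_norm w u
    have hww : ⟪w,w⟫ = ‖w‖^2 := real_inner_self_eq_norm_sq w
    have hcore := core_scalar m P Q (f (x t) - f xstar) ‖g‖ ‖u‖ ‖w‖ hm hP hQ hF
      (norm_nonneg _) (norm_nonneg _) (norm_nonneg _)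
      (by rw [hm2]; exact hPL (x t)) (by rw [hP4]; nlinarith [hQGlow (x t)])
      (by rw [hQ4]; nlinarith [hQGup (x t)])
    have hmul : θ * (f (x t) - f xstar)
        ≤ a*P*Q*(‖g‖*‖u‖) - c*θ*(‖w‖*‖u‖) + c*θ/2*‖w‖^2 := by
      have h6 := mul_le_mul_of_nonneg_left hcore hθ.le
      have e1 : θ * (Q ^ 2 / m * (‖g‖ * ‖u‖) - P ^ 2 * Q ^ 2 * (‖w‖ * ‖u‖)
          + P ^ 2 * Q ^ 2 / 2 * ‖w‖ ^ 2)
          = a*P*Q*(‖g‖*‖u‖) - c*θ*(‖w‖*‖u‖) + c*θ/2*‖w‖^2 := by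
        rw [hθ_def, hc_def]; field_simp
      linarith [h6, e1.ge, e1.le]
    have hI1' : a*P*Q*(‖g‖*‖u‖) ≤ P*Q*⟪g,u⟫ := by
      have := mul_le_mul_of_nonneg_left hI1 (mul_pos hP hQ).le
      nlinarith [this]
    have hI2' : c*θ*⟪w,u⟫ ≤ c*θ*(‖w‖*‖u‖) := by
      exact mul_le_mul_of_nonneg_left hI2 (by positivity)
    have hG2 : 0 ≤ γ * ‖g‖^2 := by positivity
    have goal_eq : D t + θ * V t
        = (P*Q*⟪g,w⟫ - P*Q*⟪g,u⟫ - γ*‖g‖^2)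
          + c/2*((θ*⟪w,u⟫ - θ*‖w‖^2 - (P*Q)⁻¹*⟪g,w⟫) + (θ*⟪w,u⟫ - θ*‖w‖^2 - (P*Q)⁻¹*⟪g,w⟫))
          + θ*(f (x t) - f xstar + c/2*‖w‖^2) := by
      simp only [hD_def, hV_def]
      rw [← hg_def, ← hw_def, hA, hB, hB', hww]
    have hcinv : c/2 * ((P*Q)⁻¹*⟪g,w⟫ + (P*Q)⁻¹*⟪g,w⟫) = P*Q*⟪g,w⟫ := by
      rw [hc_def]; field_simp; ring
    rw [goal_eq]
    linarith [hmul, hI1', hI2', hG2, hcinv]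
  have hθ_eq2 : a * (μ₀ / L₀) ^ ((1:ℝ)/4) * m = θ := by rw [hPQdiv]
  set W : ℝ → ℝ := fun t => Real.exp (θ*t) * V t with hW_def
  have hWderiv : ∀ t, 0 ≤ t → HasDerivAt W (Real.exp (θ*t) * (θ * V t + D t)) t := by
    intro t ht
    have h0 : HasDerivAt (fun s : ℝ => θ * s) θ t := by
      simpa using (hasDerivAt_id t).const_mul θ
    have h1 : HasDerivAt (fun s : ℝ => Real.exp (θ*s)) (Real.exp (θ*t) * θ) t :=
      (Real.hasDerivAt_exp (θ*t)).comp t h0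
    have h2 : HasDerivAt (fun s => Real.exp (θ*s) * V s)
        (Real.exp (θ*t) * θ * V t + Real.exp (θ*t) * D t) t := h1.mul (hVderiv t ht)
    simp only [hW_def]
    convert h2 using 1
    ring
  have hmono : AntitoneOn W (Set.Ici (0:ℝ)) := by
    apply antitoneOn_of_deriv_nonpos (convex_Ici 0)
    · exact fun t ht => ((hWderiv t ht).continuousAt).continuousWithinAt
    · intro t ht
      rw [interior_Ici] at ht
      exact ((hWderiv t ht.le).differentiableAt).differentiableWithinAt
    · intro t ht
      rw [interior_Ici] at ht
      rw [(hWderiv t ht.le).deriv]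
      have h1 := hkey t ht.le
      have h2 := Real.exp_pos (θ*t)
      nlinarith [h1, h2]
  intro t ht
  have hW := hmono Set.self_mem_Ici ht ht
  simp only [hW_def] at hW
  have hVt : V t ≤ Real.exp (-(θ*t)) * V 0 := by
    have h2 : Real.exp (θ*t) * V t ≤ Real.exp (θ*0) * V 0 := hW
    have h3 := Real.exp_pos (θ*t)
    rw [mul_zero, Real.exp_zero, one_mul] at h2
    rw [Real.exp_neg, inv_mul_eq_div, le_div_iff₀ h3]
    linarith [h2]
  have hfinal1 : f (x t) - f xstar ≤ V t := by
    have h4 : (0:ℝ) ≤ ⟪z t - xstar, z t - xstar⟫ := real_inner_self_nonneg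
    simp only [hV_def]
    nlinarith [mul_nonneg (by positivity : (0:ℝ) ≤ c/2) h4]
  have hV0 : V 0 ≤ (1 + Real.sqrt (L₀/μ₀)) * (f (x 0) - f xstar) := by
    have hsq : Real.sqrt (L₀/μ₀) = Q^2/P^2 := by
      have h5 : (Q^2/P^2)^2 = L₀/μ₀ := by rw [div_pow, ← hP4, ← hQ4]; ring
      rw [← h5, Real.sqrt_sq (by positivity)]
    have hq0 := hQGlow (x 0)
    have hF0 : 0 ≤ f (x 0) - f xstar := sub_nonneg.mpr (hmin (x 0))
    simp only [hV_def]
    rw [← hinit, hsq, real_inner_self_eq_norm_sq, hc_def]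
    have h6 : P^2*Q^2/2 * ‖x 0 - xstar‖^2 ≤ Q^2/P^2 * (f (x 0) - f xstar) := by
      rw [← hP4] at hq0
      have h7 : P^4/2 * ‖x 0 - xstar‖^2 ≤ f (x 0) - f xstar := by linarith [hq0]
      have h8 := mul_le_mul_of_nonneg_left h7 (by positivity : (0:ℝ) ≤ Q^2/P^2)
      calc P^2*Q^2/2 * ‖x 0 - xstar‖^2 = Q^2/P^2 * (P^4/2 * ‖x 0 - xstar‖^2) := by
            field_simp
        _ ≤ _ := h8
    linarith
  rw [hθ_eq2]
  calc f (x t) - f xstar ≤ V t := hfinal1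
    _ ≤ Real.exp (-(θ*t)) * V 0 := hVt
    _ ≤ Real.exp (-(θ*t)) * ((1 + Real.sqrt (L₀/μ₀)) * (f (x 0) - f xstar)) :=
        mul_le_mul_of_nonneg_left hV0 (Real.exp_pos _).le
    _ = (1 + Real.sqrt (L₀/μ₀)) * (f (x 0) - f xstar) * Real.exp (-θ*t) := by
        rw [show -θ*t = -(θ*t) by ring]; ring
end

section
/- For ε > 0, the function F_ε(x,y) = (1/2)(y - sin x)² + (ε/2)x² on ℝ² satisfies the Polyak-Łojasiewicz inequality ‖∇F_ε(x,y)‖² ≥ 2μ·F_ε(x,y) for all (x,y), with μ = (2 + ε - √(ε² + 4))/2 > 0. -/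
set_option maxHeartbeats 1000000

open scoped RealInnerProductSpace

theorem toy_example_is_PL (ε : ℝ) (hε : 0 < ε) :
    0 < (2 + ε - Real.sqrt (ε ^ 2 + 4)) / 2 ∧
    ∀ v : EuclideanSpace ℝ (Fin 2),
      ‖gradient (fun w : EuclideanSpace ℝ (Fin 2) =>
          (1 / 2) * (w 1 - Real.sin (w 0)) ^ 2 + (ε / 2) * (w 0) ^ 2) v‖ ^ 2 ≥
        2 * ((2 + ε - Real.sqrt (ε ^ 2 + 4)) / 2) *
          ((1 / 2) * (v 1 - Real.sin (v 0)) ^ 2 + (ε / 2) * (v 0) ^ 2) := by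
  set s := Real.sqrt (ε ^ 2 + 4) with hsdef
  have hs0 : 0 ≤ s := Real.sqrt_nonneg _
  have hs2 : s ^ 2 = ε ^ 2 + 4 := Real.sq_sqrt (by positivity)
  set μ := (2 + ε - s) / 2 with hμdef
  have hslt : s < 2 + ε := by
    rw [hsdef, show (2:ℝ) + ε = Real.sqrt ((2 + ε) ^ 2) from (Real.sqrt_sq (by positivity)).symm]
    apply Real.sqrt_lt_sqrt (by positivity)
    nlinarith
  have hμpos : 0 < μ := by rw [hμdef]; linarith
  have hμquad : μ ^ 2 - (2 + ε) * μ + ε = 0 := by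
    rw [hμdef]; field_simp; nlinarith
  have hμlt1 : μ < 1 := by
    have : ε < s := by nlinarith
    rw [hμdef]; linarith
  have hμltε : μ < ε := by
    have : 2 - ε < s := by nlinarith
    rw [hμdef]; linarith
  refine ⟨hμpos, fun v => ?_⟩
  set a := v 1 - Real.sin (v 0) with ha
  set b := v 0 with hb
  set c := Real.cos (v 0) with hc
  set g : EuclideanSpace ℝ (Fin 2) := (WithLp.equiv 2 (Fin 2 → ℝ)).symm ![ε * b - a * c, a] with hg
  have hp0 : HasFDerivAt (fun w : EuclideanSpace ℝ (Fin 2) => w 0)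
      (EuclideanSpace.proj (0 : Fin 2) : EuclideanSpace ℝ (Fin 2) →L[ℝ] ℝ) v := by
    exact (EuclideanSpace.proj (0 : Fin 2) : EuclideanSpace ℝ (Fin 2) →L[ℝ] ℝ).hasFDerivAt
  have hp1 : HasFDerivAt (fun w : EuclideanSpace ℝ (Fin 2) => w 1)
      (EuclideanSpace.proj (1 : Fin 2) : EuclideanSpace ℝ (Fin 2) →L[ℝ] ℝ) v := by
    exact (EuclideanSpace.proj (1 : Fin 2) : EuclideanSpace ℝ (Fin 2) →L[ℝ] ℝ).hasFDerivAt
  have hsin : HasFDerivAt (fun w : EuclideanSpace ℝ (Fin 2) => Real.sin (w 0))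
      (c • (EuclideanSpace.proj (0 : Fin 2) : EuclideanSpace ℝ (Fin 2) →L[ℝ] ℝ)) v :=
    by have := (Real.hasDerivAt_sin (v 0)).comp_hasFDerivAt v hp0; exact this
  have hA : HasFDerivAt (fun w : EuclideanSpace ℝ (Fin 2) => w 1 - Real.sin (w 0))
      ((EuclideanSpace.proj (1 : Fin 2) : EuclideanSpace ℝ (Fin 2) →L[ℝ] ℝ)
        - c • (EuclideanSpace.proj (0 : Fin 2))) v := hp1.sub hsin
  set A' : EuclideanSpace ℝ (Fin 2) →L[ℝ] ℝ :=
    (EuclideanSpace.proj (1 : Fin 2) : EuclideanSpace ℝ (Fin 2) →L[ℝ] ℝ)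
      - c • (EuclideanSpace.proj (0 : Fin 2)) with hA'
  set p0 : EuclideanSpace ℝ (Fin 2) →L[ℝ] ℝ :=
    (EuclideanSpace.proj (0 : Fin 2) : EuclideanSpace ℝ (Fin 2) →L[ℝ] ℝ) with hp0'
  have hF : HasFDerivAt (fun w : EuclideanSpace ℝ (Fin 2) =>
      (1 / 2) * (w 1 - Real.sin (w 0)) ^ 2 + (ε / 2) * (w 0) ^ 2)
      ((1 / 2 : ℝ) • (a • A' + a • A') + (ε / 2 : ℝ) • (b • p0 + b • p0)) v := by
    have he : (fun w : EuclideanSpace ℝ (Fin 2) =>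
        (1 / 2) * (w 1 - Real.sin (w 0)) ^ 2 + (ε / 2) * (w 0) ^ 2)
        = (fun w : EuclideanSpace ℝ (Fin 2) =>
        (1 / 2) * ((w 1 - Real.sin (w 0)) * (w 1 - Real.sin (w 0))) + (ε / 2) * ((w 0) * (w 0))) := by
      funext w; ring
    rw [he]
    exact ((hA.mul hA).const_mul (1/2)).add ((hp0.mul hp0).const_mul (ε/2))
  have hgrad : HasGradientAt (fun w : EuclideanSpace ℝ (Fin 2) =>
      (1 / 2) * (w 1 - Real.sin (w 0)) ^ 2 + (ε / 2) * (w 0) ^ 2) g v := by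
    rw [hasGradientAt_iff_hasFDerivAt]
    refine hF.congr_fderiv ?_
    ext w
    simp only [InnerProductSpace.toDual_apply_apply, PiLp.inner_apply, Fin.sum_univ_two, hg,
      RCLike.inner_apply, conj_trivial, WithLp.equiv_symm_apply, PiLp.toLp_apply, Matrix.cons_val_zero,
      Matrix.cons_val_one, Matrix.head_cons, hA', hp0', ContinuousLinearMap.add_apply,
      ContinuousLinearMap.smul_apply, ContinuousLinearMap.sub_apply, PiLp.proj_apply,
      smul_eq_mul]
    ring
  rw [hgrad.gradient]
  have hnorm : ‖g‖ ^ 2 = (ε * b - a * c) ^ 2 + a ^ 2 := by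
    rw [← real_inner_self_eq_norm_sq]
    simp only [PiLp.inner_apply, Fin.sum_univ_two, hg, RCLike.inner_apply, conj_trivial,
      WithLp.equiv_symm_apply, PiLp.toLp_apply, Matrix.cons_val_zero, Matrix.cons_val_one, Matrix.head_cons]
    ring
  rw [hnorm]
  have hc2 : c ^ 2 ≤ 1 := by
    rw [hc]; nlinarith [Real.sin_sq_add_cos_sq (v 0), sq_nonneg (Real.sin (v 0))]
  have key : 0 ≤ (1 - μ) * (ε - μ) - μ * c ^ 2 := by nlinarith
  have hApos : 0 < c ^ 2 + 1 - μ := by nlinarith [sq_nonneg c]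
  have hAE : 0 ≤ (c ^ 2 + 1 - μ) *
      ((ε * b - a * c) ^ 2 + a ^ 2 - μ * (a ^ 2 + ε * b ^ 2)) := by
    nlinarith [sq_nonneg ((c ^ 2 + 1 - μ) * a - ε * c * b),
      mul_nonneg (mul_nonneg hε.le key) (sq_nonneg b)]
  have hE : 0 ≤ (ε * b - a * c) ^ 2 + a ^ 2 - μ * (a ^ 2 + ε * b ^ 2) :=
    nonneg_of_mul_nonneg_right hAE hApos
  clear_value s μ a b c g A' p0
  have hr : 2 * μ * (1 / 2 * a ^ 2 + ε / 2 * b ^ 2) = μ * (a ^ 2 + ε * b ^ 2) := by ring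
  linarith
end

section
/- Let f : ℝ^d → ℝ be C¹ with global minimum f* and satisfy the PL inequality with constant μ. Then f has quadratic growth with constant μ: f(x) - f* ≥ (μ/2)·d(x, argmin f)², where d(x, argmin f) is the distance from x to the set of minimizers. In particular, if x* is the unique minimizer, f(x) - f* ≥ (μ/2)‖x-x*‖². -/
open scoped RealInnerProductSpace
open Filter Topology Metric Set

set_option maxHeartbeats 1000000 in
theorem PL_implies_quadratic_growth {d : ℕ} (f : EuclideanSpace ℝ (Fin d) → ℝ)
    (μ : ℝ) (hμ : 0 < μ) (hf : ContDiff ℝ 1 f)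
    (xstar : EuclideanSpace ℝ (Fin d)) (hmin : ∀ y, f xstar ≤ f y)
    (hPL : ∀ x, ‖gradient f x‖ ^ 2 ≥ 2 * μ * (f x - f xstar)) :
    (∀ x, f x - f xstar ≥
      μ / 2 * (Metric.infDist x {y | ∀ z, f y ≤ f z}) ^ 2) ∧
    ({y | ∀ z, f y ≤ f z} = {xstar} →
      ∀ x, f x - f xstar ≥ μ / 2 * ‖x - xstar‖ ^ 2) := by
  set S : Set (EuclideanSpace ℝ (Fin d)) := {y | ∀ z, f y ≤ f z} with hSdef
  have hfc : Continuous f := hf.continuous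
  have hfd : Differentiable ℝ f := hf.differentiable one_ne_zero
  have key : ∀ x, f x - f xstar ≥ μ / 2 * (Metric.infDist x S) ^ 2 := by
    intro x
    have hfx0 : 0 ≤ f x - f xstar := sub_nonneg.mpr (hmin x)
    set G := Real.sqrt (f x - f xstar) with hGdef
    have hG0 : 0 ≤ G := Real.sqrt_nonneg _
    have hG2 : G ^ 2 = f x - f xstar := Real.sq_sqrt hfx0
    set q := Real.sqrt (μ / 2) with hqdef
    have hq0 : 0 < q := Real.sqrt_pos.mpr (by linarith)
    have hq2 : q ^ 2 = μ / 2 := Real.sq_sqrt (by linarith)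
    have main : ∀ σ : ℝ, 0 < σ → σ < q → σ * Metric.infDist x S ≤ G := by
      intro σ hσ0 hσq
      set h : EuclideanSpace ℝ (Fin d) → ℝ :=
        fun z => Real.sqrt (f z - f xstar) + σ * ‖z - x‖ with hhdef
      have hhc : Continuous h :=
        (Real.continuous_sqrt.comp (hfc.sub continuous_const)).add
          (continuous_const.mul ((continuous_id.sub continuous_const).norm))
      have hcoer : Tendsto h (cocompact _) atTop := by
        have h1 : Tendsto (fun z : EuclideanSpace ℝ (Fin d) => σ * (‖z‖ - ‖x‖))
            (cocompact _) atTop := by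
          refine Tendsto.const_mul_atTop hσ0 ?_
          simpa [sub_eq_add_neg] using tendsto_atTop_add_const_right _ (-‖x‖) tendsto_norm_cocompact_atTop
        refine tendsto_atTop_mono (fun z => ?_) h1
        have hn : ‖z‖ - ‖x‖ ≤ ‖z - x‖ := norm_sub_norm_le z x
        have hs : 0 ≤ Real.sqrt (f z - f xstar) := Real.sqrt_nonneg _
        have : σ * (‖z‖ - ‖x‖) ≤ σ * ‖z - x‖ :=
          mul_le_mul_of_nonneg_left hn hσ0.le
        simp only [hhdef]; linarith
      obtain ⟨y, hy⟩ := hhc.exists_forall_le hcoer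
      have hyx : Real.sqrt (f y - f xstar) + σ * ‖y - x‖ ≤ G := by
        have := hy x
        simpa [hhdef, hGdef] using this
      have hfy : f y = f xstar := by
        by_contra hne
        have he : 0 < f y - f xstar := sub_pos.mpr (lt_of_le_of_ne (hmin y) (Ne.symm hne))
        set gy := Real.sqrt (f y - f xstar) with hgydef
        have hgy : 0 < gy := Real.sqrt_pos.mpr he
        have hgy2 : gy ^ 2 = f y - f xstar := Real.sq_sqrt he.le
        set v := gradient f y with hvdef
        have hv2 : ‖v‖ ^ 2 ≥ 2 * μ * (f y - f xstar) := hPL y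
        have hv0 : 0 < ‖v‖ := by
          by_contra hv
          push_neg at hv
          have : ‖v‖ = 0 := le_antisymm hv (norm_nonneg v)
          rw [this] at hv2
          nlinarith
        -- derivative of φ t = sqrt (f (y - t • v) - f xstar) at 0
        have hgrad : HasGradientAt f v y := (hfd y).hasGradientAt
        have hfder : HasFDerivAt f (InnerProductSpace.toDual ℝ _ v) y :=
          hgrad.hasFDerivAt
        have hc : HasDerivAt (fun t : ℝ => y - t • v) (-v) 0 := by
          simpa using ((hasDerivAt_id (0:ℝ)).smul_const v).const_sub y
        have hcomp : HasDerivAt (fun t : ℝ => f (y - t • v)) (-(‖v‖ ^ 2)) 0 := by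
          have h0 : HasFDerivAt f (InnerProductSpace.toDual ℝ _ v)
              ((fun t : ℝ => y - t • v) 0) := by simpa using hfder
          have h1 := h0.comp_hasDerivAt 0 hc
          have hval : (InnerProductSpace.toDual ℝ (EuclideanSpace ℝ (Fin d)) v) (-v)
              = -(‖v‖ ^ 2) := by
            rw [InnerProductSpace.toDual_apply_apply, inner_neg_right, real_inner_self_eq_norm_sq]
          rw [hval] at h1
          exact h1
        have hsub : HasDerivAt (fun t : ℝ => f (y - t • v) - f xstar) (-(‖v‖ ^ 2)) 0 :=
          hcomp.sub_const _
        have hsq : HasDerivAt Real.sqrt (1 / (2 * gy))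
            ((fun t : ℝ => f (y - t • v) - f xstar) 0) := by
          have := Real.hasDerivAt_sqrt (ne_of_gt he)
          simpa [hgydef] using this
        have hφ : HasDerivAt (fun t : ℝ => Real.sqrt (f (y - t • v) - f xstar))
            (1 / (2 * gy) * (-(‖v‖ ^ 2))) 0 := hsq.comp 0 hsub
        set φ : ℝ → ℝ := fun t => Real.sqrt (f (y - t • v) - f xstar) with hφdef
        have hφ0 : φ 0 = gy := by simp [hφdef, hgydef]
        have hslope : ∀ t ∈ Ioi (0:ℝ), -(σ * ‖v‖) ≤ slope φ 0 t := by
          intro t ht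
          have ht0 : (0:ℝ) < t := ht
          have h1 := hy (y - t • v)
          have hnorm : ‖(y - t • v) - x‖ ≤ ‖y - x‖ + t * ‖v‖ := by
            have : (y - t • v) - x = (y - x) + (-(t • v)) := by abel
            rw [this]
            calc ‖(y - x) + (-(t • v))‖ ≤ ‖y - x‖ + ‖-(t • v)‖ := norm_add_le _ _
              _ = ‖y - x‖ + t * ‖v‖ := by
                  rw [norm_neg, norm_smul, Real.norm_eq_abs, abs_of_pos ht0]
          have h2 : gy + σ * ‖y - x‖ ≤ φ t + σ * (‖y - x‖ + t * ‖v‖) := by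
            have h3 : h y ≤ φ t + σ * ‖(y - t • v) - x‖ := h1
            have h4 : σ * ‖(y - t • v) - x‖ ≤ σ * (‖y - x‖ + t * ‖v‖) :=
              mul_le_mul_of_nonneg_left hnorm hσ0.le
            simp only [hhdef, hgydef] at h3 ⊢
            linarith
          have h5 : -(σ * ‖v‖) * t ≤ φ t - φ 0 := by
            rw [hφ0]; nlinarith
          rw [slope_def_field, sub_zero, le_div_iff₀ ht0]
          linarith
        have hderiv_ge : -(σ * ‖v‖) ≤ 1 / (2 * gy) * (-(‖v‖ ^ 2)) := by
          have h1 : Tendsto (slope φ 0) (𝓝[>] (0:ℝ))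
              (𝓝 (1 / (2 * gy) * (-(‖v‖ ^ 2)))) :=
            (hasDerivAt_iff_tendsto_slope.mp hφ).mono_left
              (nhdsWithin_mono 0 (fun t ht => ne_of_gt ht))
          exact ge_of_tendsto h1 (eventually_nhdsWithin_of_forall hslope)
        -- contradiction
        have hvle : ‖v‖ ≤ 2 * σ * gy := by
          have h1 : ‖v‖ ^ 2 ≤ 2 * σ * gy * ‖v‖ := by
            have h2 : ‖v‖ ^ 2 / (2 * gy) ≤ σ * ‖v‖ := by
              have := hderiv_ge
              have h3 : 1 / (2 * gy) * (‖v‖ ^ 2) ≤ σ * ‖v‖ := by linarith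
              calc ‖v‖ ^ 2 / (2 * gy) = 1 / (2 * gy) * (‖v‖ ^ 2) := by ring
                _ ≤ σ * ‖v‖ := h3
            have h4 : 0 < 2 * gy := by linarith
            calc ‖v‖ ^ 2 = ‖v‖ ^ 2 / (2 * gy) * (2 * gy) := by field_simp
              _ ≤ σ * ‖v‖ * (2 * gy) := mul_le_mul_of_nonneg_right h2 h4.le
              _ = 2 * σ * gy * ‖v‖ := by ring
          nlinarith
        have h6 : ‖v‖ ^ 2 ≤ 4 * σ ^ 2 * gy ^ 2 := by
          nlinarith [norm_nonneg v, mul_pos hσ0 hgy]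
        have h7 : σ ^ 2 < q ^ 2 := by nlinarith
        have h8 : 0 < gy ^ 2 := pow_pos hgy 2
        nlinarith
      -- y is a minimizer
      have hyS : y ∈ S := by
        intro z
        rw [hfy]; exact hmin z
      have hgy0 : Real.sqrt (f y - f xstar) = 0 := by
        rw [hfy]; simp
      have hdle : Metric.infDist x S ≤ ‖y - x‖ := by
        have := Metric.infDist_le_dist_of_mem (x := x) hyS
        rwa [dist_eq_norm, norm_sub_rev] at this
      calc σ * Metric.infDist x S ≤ σ * ‖y - x‖ :=
            mul_le_mul_of_nonneg_left hdle hσ0.le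
        _ ≤ G := by rw [hgy0] at hyx; linarith
    -- pass to the limit σ → q
    have hD0 : 0 ≤ Metric.infDist x S := Metric.infDist_nonneg
    set D := Metric.infDist x S with hDdef
    have hqD : q * D ≤ G := by
      by_contra hcon
      push_neg at hcon
      have hDpos : 0 < D := by nlinarith
      obtain ⟨σ, h1, h2⟩ := exists_between ((div_lt_iff₀ hDpos).mpr (by linarith : G < q * D))
      have hσ0 : 0 < σ := lt_of_le_of_lt (div_nonneg hG0 hDpos.le) h1
      have h3 := main σ hσ0 h2
      have h4 : G < σ * D := (div_lt_iff₀ hDpos).mp h1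
      linarith
    have hsq : (q * D) ^ 2 ≤ G ^ 2 := by
      apply pow_le_pow_left₀ (by positivity) hqD
    rw [mul_pow, hq2, hG2] at hsq
    linarith
  refine ⟨key, fun hSet x => ?_⟩
  have := key x
  rw [hSet, Metric.infDist_singleton, dist_eq_norm] at this
  exact this
end

section
/- Let f : ℝ^d → ℝ be C¹ with minimizer x*, and suppose f is both (PL, AC, QG⁺): ‖∇f(x)‖² ≥ 2μ(f(x)-f*), ⟨∇f(x),x-x*⟩ ≥ a‖∇f(x)‖‖x-x*‖, and f(x)-f* ≤ (L₀/2)‖x-x*‖² for all x, and additionally f(x)-f* ≥ (μ₀/2)‖x-x*‖². Then f is strongly quasar-convex in the sense: f* ≥ f(x) + (1/a)·√(L₀/μ)·⟨∇f(x), x*-x⟩ + (√(L₀μ₀)/2)·‖x-x*‖² for all x. -/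
open scoped RealInnerProductSpace

theorem PL_AC_QG_implies_sqc {d : ℕ} (f : EuclideanSpace ℝ (Fin d) → ℝ)
    (μ μ₀ L₀ a : ℝ) (hμ : 0 < μ) (hμ₀ : 0 < μ₀) (hL₀ : 0 < L₀)
    (ha : a ∈ Set.Ioc (0 : ℝ) 1) (hf : ContDiff ℝ 1 f)
    (xstar : EuclideanSpace ℝ (Fin d)) (hmin : ∀ y, f xstar ≤ f y)
    (hPL : ∀ x, ‖gradient f x‖ ^ 2 ≥ 2 * μ * (f x - f xstar))
    (hAC : ∀ x, ⟪gradient f x, x - xstar⟫ ≥ a * ‖gradient f x‖ * ‖x - xstar‖)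
    (hQGlow : ∀ x, f x - f xstar ≥ μ₀ / 2 * ‖x - xstar‖ ^ 2)
    (hQGup : ∀ x, f x - f xstar ≤ L₀ / 2 * ‖x - xstar‖ ^ 2) :
    ∀ x, f xstar ≥
      f x + (1 / a) * Real.sqrt (L₀ / μ) * ⟪gradient f x, xstar - x⟫
        + Real.sqrt (L₀ * μ₀) / 2 * ‖x - xstar‖ ^ 2 := by
  intro x
  obtain ⟨ha0, ha1⟩ := ha
  by_cases hx : x = xstar
  · subst hx
    simp
  have hg0 : (0:ℝ) ≤ ‖gradient f x‖ := norm_nonneg _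
  have hr0 : (0:ℝ) < ‖x - xstar‖ := by
    simpa [sub_eq_zero] using norm_pos_iff.mpr (sub_ne_zero.mpr hx)
  set g := ‖gradient f x‖ with hg
  set r := ‖x - xstar‖ with hr
  have hD0 : 0 ≤ f x - f xstar := by linarith [hmin x]
  set D := f x - f xstar with hDdef
  have hip : ⟪gradient f x, xstar - x⟫ = -⟪gradient f x, x - xstar⟫ := by
    rw [← inner_neg_right]; congr 1; abel
  have hAC' : a * g * r ≤ ⟪gradient f x, x - xstar⟫ := hAC x
  set c := Real.sqrt (L₀ / μ) with hc
  have hc0 : 0 ≤ c := Real.sqrt_nonneg _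
  have hc2 : c ^ 2 = L₀ / μ := Real.sq_sqrt (by positivity)
  set b := Real.sqrt (L₀ * μ₀) with hb
  have hb0 : 0 ≤ b := Real.sqrt_nonneg _
  have hb2 : b ^ 2 = L₀ * μ₀ := Real.sq_sqrt (by positivity)
  have hlow : μ₀ / 2 * r ^ 2 ≤ D := hQGlow x
  have hup : D ≤ L₀ / 2 * r ^ 2 := hQGup x
  have hPL' : g ^ 2 ≥ 2 * μ * D := hPL x
  clear_value D g r c b
  have hr2 : 0 < r ^ 2 := by positivity
  have hμL : μ₀ ≤ L₀ := by nlinarith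
  have hbL : b ≤ L₀ := by nlinarith
  have hgD : 2 * L₀ * D ≤ L₀ / μ * g ^ 2 := by
    rw [div_mul_eq_mul_div, le_div_iff₀ hμ]
    nlinarith
  have hA0 : 0 ≤ D + b / 2 * r ^ 2 := by positivity
  have hX0 : 0 ≤ c * g * r := by positivity
  have hkey : (D + b / 2 * r ^ 2) ^ 2 ≤ 2 * L₀ * D * r ^ 2 := by
    have e1 : D * D ≤ D * (L₀ / 2 * r ^ 2) := mul_le_mul_of_nonneg_left hup hD0
    have e2 : b ^ 2 * (r ^ 2) ^ 2 / 4 ≤ L₀ * r ^ 2 * D / 2 := by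
      have := mul_le_mul_of_nonneg_left hlow (by positivity : (0:ℝ) ≤ L₀ * r ^ 2)
      rw [hb2]; linarith
    have e3 : b * (D * r ^ 2) ≤ L₀ * (D * r ^ 2) :=
      mul_le_mul_of_nonneg_right hbL (mul_nonneg hD0 hr2.le)
    have expand : (D + b / 2 * r ^ 2) ^ 2
        = D * D + b * (D * r ^ 2) + b ^ 2 * (r ^ 2) ^ 2 / 4 := by ring
    linarith [expand.le, expand.ge]
  have hsq : (D + b / 2 * r ^ 2) ^ 2 ≤ (c * g * r) ^ 2 := by
    have hXeq : (c * g * r) ^ 2 = (L₀ / μ * g ^ 2) * r ^ 2 := by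
      rw [mul_pow, mul_pow, hc2]
    have h1 : 2 * L₀ * D * r ^ 2 ≤ (L₀ / μ * g ^ 2) * r ^ 2 :=
      mul_le_mul_of_nonneg_right hgD (le_of_lt hr2)
    linarith [hXeq.ge, hXeq.le]
  have hmain : D + b / 2 * r ^ 2 ≤ c * g * r :=
    (pow_le_pow_iff_left₀ hA0 hX0 two_ne_zero).mp hsq
  have h1 : (1 / a) * c * ⟪gradient f x, xstar - x⟫ ≤ -(c * g * r) := by
    rw [hip]
    have h2 : (1 / a) * c * (-⟪gradient f x, x - xstar⟫) ≤ (1 / a) * c * (-(a * g * r)) := by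
      apply mul_le_mul_of_nonneg_left (by linarith) (by positivity)
    have h3 : (1 / a) * c * (-(a * g * r)) = -(c * g * r) := by
      field_simp
    linarith
  have : b / 2 * r ^ 2 = b / 2 * r ^ 2 := rfl
  linarith [h1, hmain]
end

section
/- Let η : ℝ≥0 → ℝ be C¹ and positive, η' : ℝ≥0 → ℝ continuous, γ, γ' ∈ ℝ constants, and f : ℝ^d → ℝ be C². If (x,z) : ℝ≥0 → ℝ^d × ℝ^d is a C² solution of x'(t) = η(t)(z(t)-x(t)) - γ∇f(x(t)) and z'(t) = η'(t)(x(t)-z(t)) - γ'∇f(x(t)), then x satisfies the second-order equation x''(t) + (η(t) - η̇(t)/η(t) + η'(t))x'(t) + γ∇²f(x(t))x'(t) + (η'(t)γ + η(t)γ' - (η̇(t)/η(t))γ)∇f(x(t)) = 0. -/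
open scoped RealInnerProductSpace

theorem nesterov_ode_second_order_form {d : ℕ} (f : EuclideanSpace ℝ (Fin d) → ℝ)
    (hf : ContDiff ℝ 2 f)
    (η ηdot η' : ℝ → ℝ) (hηpos : ∀ t, 0 < η t)
    (hη : ∀ t, HasDerivAt η (ηdot t) t) (hη' : Continuous η')
    (γ γ' : ℝ)
    (x xdot xddot z : ℝ → EuclideanSpace ℝ (Fin d))
    (hx : ∀ t, HasDerivAt x (xdot t) t)
    (hxd : ∀ t, HasDerivAt xdot (xddot t) t)
    (hode1 : ∀ t, xdot t = (η t) • (z t - x t) - γ • gradient f (x t))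
    (hode2 : ∀ t, HasDerivAt z ((η' t) • (x t - z t) - γ' • gradient f (x t)) t) :
    ∀ t, xddot t + (η t - ηdot t / η t + η' t) • xdot t
      + γ • (fderiv ℝ (gradient f) (x t) (xdot t))
      + (η' t * γ + η t * γ' - (ηdot t / η t) * γ) • gradient f (x t) = 0 := by
  have hg : ContDiff ℝ 1 (gradient f) := by
    have h1 : ContDiff ℝ 1 (fderiv ℝ f) := hf.fderiv_right (by norm_num)
    exact ((InnerProductSpace.toDual ℝ (EuclideanSpace ℝ (Fin d))).symm.contDiff).comp h1
  intro t
  have ha : η t ≠ 0 := (hηpos t).ne'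
  -- derivative of gradient f ∘ x
  have hgx : HasDerivAt (fun s => gradient f (x s))
      (fderiv ℝ (gradient f) (x t) (xdot t)) t :=
    ((hg.differentiable one_ne_zero (x t)).hasFDerivAt).comp_hasDerivAt t (hx t)
  set G := gradient f (x t) with hG
  set H := fderiv ℝ (gradient f) (x t) (xdot t) with hH
  have hzx : HasDerivAt (fun s => z s - x s)
      ((η' t • (x t - z t) - γ' • G) - xdot t) t := (hode2 t).sub (hx t)
  have hF : HasDerivAt (fun s => η s • (z s - x s) - γ • gradient f (x s))
      ((η t • ((η' t • (x t - z t) - γ' • G) - xdot t) + ηdot t • (z t - x t)) - γ • H) t :=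
    ((hη t).smul hzx).sub (hgx.const_smul γ)
  have hxdF : xdot = fun s => η s • (z s - x s) - γ • gradient f (x s) := funext hode1
  rw [← hxdF] at hF
  have heq : xddot t = (η t • ((η' t • (x t - z t) - γ' • G) - xdot t) + ηdot t • (z t - x t)) - γ • H :=
    (hxd t).unique hF
  have hzx2 : z t - x t = (η t)⁻¹ • (xdot t + γ • G) := by
    have h := hode1 t
    rw [eq_sub_iff_add_eq] at h
    rw [hG, h, smul_smul, inv_mul_cancel₀ ha, one_smul]
  have hxz : x t - z t = -((η t)⁻¹ • (xdot t + γ • G)) := by rw [← hzx2, neg_sub]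
  rw [heq, hzx2, hxz]
  match_scalars <;> field_simp <;> ring
end
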